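/- arXiv:1808.00696 — 10 statements merged into one kernel-verified Lean document; each statement's English description precedes it below -/
import Mathlib

section
/- Let N > 3 be an integer and let λ₁ < λ₂ < ⋯ < λ_N be integers such that λ_n ≡ n − 1 (mod 2) for every n (i.e. the n-th value has parity (−1)^{n+1}). Then the rational number S = Σ_{n=1}^{N} (−1)^{λ_n} / ∏_{m ≠ n} (λ_n − λ_m) is nonzero and its 2-adic valuation is at least 1; equivalently, R = 1/S is a rational number whose denominator, written in lowest terms, is divisible by 2. -/
/-!
`S` is the divided difference of `x ↦ (-1) ^ x` at the nodes `λ_i`. For increasing nodes the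
`i`-th denominator has sign `(-1) ^ (N - 1 - i)`, so under the parity hypothesis all summands have
the same sign and `S ≠ 0`.

For the valuation, shift the nodes by an even integer to make them nonnegative and expand
`(-1) ^ x = (1 - 2) ^ x = ∑ₖ (-2) ^ k * (x choose k)`. Since `k! * (x choose k)` is the integer
polynomial `x (x - 1) ⋯ (x - k + 1)` and divided differences of integer polynomials at integer
nodes are integers, the `k`-th term lies in `(2 ^ k / k!) ℤ`, which has 2-adic valuation at least
`1` because `v₂(k!) < k`. The `k = 0` term vanishes: the divided difference of a constant at two
or more nodes is zero.
-/

open Finset Polynomial Nat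

section DividedDifference

variable {ι K : Type*} [DecidableEq ι] [Field K]

def divDiff (s : Finset ι) (v : ι → K) : (ι → K) →ₗ[K] K :=
  ∑ i ∈ s, (∏ j ∈ s.erase i, (v i - v j))⁻¹ • LinearMap.proj i

variable {s : Finset ι} {v : ι → K}

theorem divDiff_apply (g : ι → K) :
    divDiff s v g = ∑ i ∈ s, g i / ∏ j ∈ s.erase i, (v i - v j) := by
  simp [divDiff, div_eq_inv_mul]

theorem divDiff_congr {v' g g' : ι → K} (hv : ∀ i ∈ s, v i = v' i)
    (hg : ∀ i ∈ s, g i = g' i) : divDiff s v g = divDiff s v' g' := by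
  simp only [divDiff_apply]
  refine sum_congr rfl fun i hi => ?_
  rw [hg i hi, prod_congr rfl fun j hj => by rw [hv i hi, hv j (mem_of_mem_erase hj)]]

theorem divDiff_singleton (a : ι) (g : ι → K) : divDiff {a} v g = g a := by
  simp [divDiff_apply]

theorem divDiff_add_const (c : K) (g : ι → K) :
    divDiff s (fun i => v i + c) g = divDiff s v g := by
  simp [divDiff_apply]

theorem divDiff_sub_mul (hv : Set.InjOn v s) {a : ι} (ha : a ∈ s) (g : ι → K) :
    divDiff s v (fun i => (v i - v a) * g i) = divDiff (s.erase a) v g := by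
  rw [divDiff_apply, divDiff_apply, ← add_sum_erase s _ ha, sub_self, zero_mul, zero_div,
    zero_add]
  refine sum_congr rfl fun i hi => ?_
  obtain ⟨hia, his⟩ := mem_erase.mp hi
  have hsub : v i - v a ≠ 0 := sub_ne_zero.mpr fun h => hia (hv his ha h)
  rw [← mul_prod_erase (s.erase i) _ (mem_erase.mpr ⟨Ne.symm hia, ha⟩), erase_right_comm,
    mul_div_mul_left _ _ hsub]

theorem divDiff_one (hv : Set.InjOn v s) : divDiff s v 1 = if #s = 1 then 1 else 0 := by
  induction s using Finset.strongInduction with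
  | H s ih =>
    obtain hs | hs := le_or_gt #s 1
    · rcases Nat.le_one_iff_eq_zero_or_eq_one.mp hs with h | h
      · simp [card_eq_zero.mp h, divDiff_apply]
      · obtain ⟨a, rfl⟩ := card_eq_one.mp h
        simp [divDiff_singleton]
    obtain ⟨a, ha, b, hb, hab⟩ := one_lt_card.mp hs
    have hsub : v b - v a ≠ 0 := sub_ne_zero.mpr fun h => hab (hv ha hb h.symm)
    have herase : divDiff (s.erase a) v 1 = divDiff (s.erase b) v 1 := by
      rw [ih _ (erase_ssubset ha) (hv.mono (erase_subset a s)),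
        ih _ (erase_ssubset hb) (hv.mono (erase_subset b s)), card_erase_of_mem ha,
        card_erase_of_mem hb]
    have hmul : (v b - v a) * divDiff s v 1 = 0 := by
      rw [← smul_eq_mul, ← map_smul, ← sub_eq_zero.mpr herase, ← divDiff_sub_mul hv ha,
        ← divDiff_sub_mul hv hb, ← map_sub]
      congr 1
      ext i
      simp only [Pi.smul_apply, Pi.one_apply, Pi.sub_apply, smul_eq_mul]
      ring
    rw [if_neg hs.ne', (mul_eq_zero.mp hmul).resolve_left hsub]

theorem divDiff_pow_mem (A : Subring K) (hv : Set.InjOn v s) (hA : ∀ i ∈ s, v i ∈ A)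
    (m : ℕ) : divDiff s v (fun i => v i ^ m) ∈ A := by
  induction m generalizing s with
  | zero =>
    simp only [pow_zero]
    rw [← Pi.one_def, divDiff_one hv]
    split_ifs
    exacts [A.one_mem, A.zero_mem]
  | succ m ih =>
    obtain rfl | ⟨a, ha⟩ := s.eq_empty_or_nonempty
    · simp [divDiff_apply]
    have hsplit : (fun i => v i ^ (m + 1)) =
        (fun i => (v i - v a) * v i ^ m) + v a • fun i => v i ^ m := by
      ext i
      simp only [Pi.add_apply, Pi.smul_apply, smul_eq_mul]
      ring
    rw [hsplit, map_add, map_smul, divDiff_sub_mul hv ha, smul_eq_mul]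
    exact add_mem (ih (hv.mono (erase_subset a s)) fun i hi => hA i (mem_of_mem_erase hi))
      (mul_mem (hA a ha) (ih hv hA))

theorem divDiff_eval_mem (A : Subring K) (hv : Set.InjOn v s) (hA : ∀ i ∈ s, v i ∈ A)
    {p : K[X]} (hp : ∀ m, p.coeff m ∈ A) : divDiff s v (fun i => p.eval (v i)) ∈ A := by
  have hsum : (fun i => p.eval (v i)) =
      ∑ m ∈ range (p.natDegree + 1), p.coeff m • fun i => v i ^ m := by
    ext i
    simp [eval_eq_sum_range]
  rw [hsum, map_sum]
  refine sum_mem fun m _ => ?_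
  rw [map_smul, smul_eq_mul]
  exact mul_mem (hp m) (divDiff_pow_mem A hv hA m)

end DividedDifference

section Sign

variable {K : Type*} [Field K] [LinearOrder K] [IsStrictOrderedRing K]

theorem neg_one_pow_card_Ioi_mul_prod_sub_pos {ι : Type*} [LinearOrder ι] [Fintype ι]
    [LocallyFiniteOrderTop ι] [LocallyFiniteOrderBot ι] {v : ι → K} (hv : StrictMono v)
    (i : ι) : 0 < (-1) ^ #(Ioi i) * ∏ j ∈ univ.erase i, (v i - v j) := by
  rw [← compl_singleton, ← Ioi_disjUnion_Iio, prod_disjUnion, ← mul_assoc, ← prod_neg]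
  exact mul_pos (prod_pos fun j hj => by simpa using hv (mem_Ioi.mp hj))
    (prod_pos fun j hj => by simpa using hv (mem_Iio.mp hj))

theorem divDiff_ne_zero_of_alternating {N : ℕ} [NeZero N] {v : Fin N → K} (hv : StrictMono v)
    {g : Fin N → K} (hg : ∀ i : Fin N, 0 < (-1) ^ (i : ℕ) * g i) :
    divDiff univ v g ≠ 0 := by
  suffices 0 < (-1) ^ (N - 1) * divDiff univ v g by
    intro h
    simp [h] at this
  rw [divDiff_apply, mul_sum]
  refine sum_pos (fun i _ => ?_) univ_nonempty
  have hP := neg_one_pow_card_Ioi_mul_prod_sub_pos hv i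
  rw [Fin.card_Ioi] at hP
  have hsign : (-1 : K) ^ (N - 1) * (-1) ^ (N - 1 - i) = (-1) ^ (i : ℕ) := by
    rw [← pow_add, show N - 1 + (N - 1 - i) = i + 2 * (N - 1 - i) by omega, pow_add, pow_mul,
      neg_one_sq, one_pow, mul_one]
  calc (0 : K)
        < (-1) ^ (i : ℕ) * g i / ((-1) ^ (N - 1 - i) * ∏ j ∈ univ.erase i, (v i - v j)) :=
          div_pos (hg i) hP
    _ = _ := by
      rw [← hsign]
      field_simp

end Sign

section TwoAdic

theorem padicNorm_le_inv_iff_one_le_padicValRat {p : ℕ} [Fact p.Prime] {q : ℚ} (hq : q ≠ 0) :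
    padicNorm p q ≤ (p : ℚ)⁻¹ ↔ 1 ≤ padicValRat p q := by
  rw [padicNorm.eq_zpow_of_nonzero hq, ← zpow_neg_one,
    zpow_le_zpow_iff_right₀ (mod_cast (Fact.out : p.Prime).one_lt), neg_le_neg_iff]

theorem padicNorm_pow_div_factorial_le {p k : ℕ} [Fact p.Prime] (hk : k ≠ 0) :
    padicNorm p ((p : ℚ) ^ k / k !) ≤ (p : ℚ)⁻¹ := by
  have hp : (p : ℚ) ≠ 0 := mod_cast (Fact.out : p.Prime).ne_zero
  rw [padicNorm_le_inv_iff_one_le_padicValRat (by positivity),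
    padicValRat.div (by positivity) (by positivity), padicValRat.pow,
    padicValRat.self (Fact.out : p.Prime).one_lt, padicValRat.of_nat]
  have := padicValNat_factorial_lt_of_ne_zero p hk
  omega

theorem neg_one_pow_eq_sum_choose {R : Type*} [CommRing R] {M n : ℕ} (h : n ≤ M) :
    (-1 : R) ^ n = ∑ k ∈ range (M + 1), (-2 : R) ^ k * n.choose k := by
  have hsub : range (n + 1) ⊆ range (M + 1) := range_subset_range.mpr (by omega)
  rw [show (-1 : R) = -2 + 1 by norm_num, add_pow, ← sum_subset hsub fun k _ hk => ?_]
  · simp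
  · rw [choose_eq_zero_of_lt (by simpa using hk), cast_zero, mul_zero]

variable {ι : Type*} [DecidableEq ι] {s : Finset ι}

theorem factorial_mul_divDiff_choose_mem_bot {n : ι → ℕ} (hn : Set.InjOn n s) (k : ℕ) :
    k ! * divDiff s (fun i => (n i : ℚ)) (fun i => ((n i).choose k : ℚ)) ∈
      (⊥ : Subring ℚ) := by
  have hv : Set.InjOn (fun i => (n i : ℚ)) s := Nat.cast_injective.comp_injOn hn
  have hdesc : (k ! : ℚ) • (fun i => ((n i).choose k : ℚ)) =
      fun i => (descPochhammer ℚ k).eval (n i : ℚ) := by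
    ext i
    simp [descPochhammer_eval_eq_descFactorial, descFactorial_eq_factorial_mul_choose]
  rw [← smul_eq_mul, ← map_smul, hdesc]
  refine divDiff_eval_mem ⊥ hv (fun i _ => natCast_mem _ _) fun m => ?_
  rw [← descPochhammer_map (Int.castRingHom ℚ), coeff_map]
  exact intCast_mem _ _

theorem padicNorm_divDiff_neg_one_pow_le {n : ι → ℕ} (hn : Set.InjOn n s) (hs : 2 ≤ #s) :
    padicNorm 2 (divDiff s (fun i => (n i : ℚ)) fun i => (-1) ^ n i) ≤ 2⁻¹ := by
  have hv : Set.InjOn (fun i => (n i : ℚ)) s := Nat.cast_injective.comp_injOn hn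
  have hexpand : ∀ i ∈ s, (-1 : ℚ) ^ n i =
      (∑ k ∈ range (s.sup n + 1), (-2 : ℚ) ^ k • fun i => ((n i).choose k : ℚ)) i :=
    fun i hi => by simpa [Finset.sum_apply] using neg_one_pow_eq_sum_choose (le_sup (f := n) hi)
  rw [divDiff_congr (fun _ _ => rfl) hexpand, map_sum]
  refine padicNorm.sum_le' (fun k _ => ?_) (by norm_num)
  rw [map_smul, smul_eq_mul]
  obtain rfl | hk := eq_or_ne k 0
  · simp only [choose_zero_right, cast_one, ← Pi.one_def, divDiff_one hv,
      if_neg (show #s ≠ 1 by omega)]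
    simp
  obtain ⟨z, hz⟩ := Subring.mem_bot.mp (factorial_mul_divDiff_choose_mem_bot hn k)
  have hterm : (-2 : ℚ) ^ k * divDiff s (fun i => (n i : ℚ)) (fun i => ((n i).choose k : ℚ)) =
      (2 ^ k / k !) * (((-1) ^ k * z : ℤ) : ℚ) := by
    push_cast
    rw [hz, neg_pow]
    field_simp
  rw [hterm, padicNorm.mul]
  have hpow : padicNorm 2 ((2 : ℚ) ^ k / k !) ≤ 2⁻¹ :=
    mod_cast padicNorm_pow_div_factorial_le hk
  simpa using mul_le_mul hpow (padicNorm.of_int _) (padicNorm.nonneg _) (by norm_num)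

theorem one_le_padicValRat_divDiff_neg_one_zpow {v : ι → ℤ} (hv : Set.InjOn v s)
    (hs : 2 ≤ #s) (h0 : divDiff s (fun i => (v i : ℚ)) (fun i => (-1) ^ v i) ≠ 0) :
    1 ≤ padicValRat 2 (divDiff s (fun i => (v i : ℚ)) fun i => (-1) ^ v i) := by
  obtain ⟨b, hb⟩ := (s.image v).bddBelow
  have hnonneg : ∀ i ∈ s, 0 ≤ v i + 2 * |b| := fun i hi => by
    have := hb (mem_coe.mpr (mem_image_of_mem v hi))
    have := neg_abs_le b
    have := abs_nonneg b
    omega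
  set n : ι → ℕ := fun i => (v i + 2 * |b|).toNat
  have hn : ∀ i ∈ s, (n i : ℤ) = v i + 2 * |b| := fun i hi =>
    Int.toNat_of_nonneg (hnonneg i hi)
  have hshift : divDiff s (fun i => (v i : ℚ)) (fun i => (-1) ^ v i) =
      divDiff s (fun i => (n i : ℚ)) fun i => (-1) ^ n i := by
    rw [← divDiff_add_const (2 * |b| : ℚ)]
    refine divDiff_congr (fun i hi => ?_) fun i hi => ?_
    · exact_mod_cast (hn i hi).symm
    · rw [← zpow_natCast, hn i hi, zpow_add₀ (by norm_num), (even_two_mul _).neg_one_zpow,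
        mul_one]
  have hninj : Set.InjOn n s := fun i hi j hj h => hv hi hj <| add_right_cancel <| by
    rw [← hn i hi, ← hn j hj, h]
  rw [hshift] at h0 ⊢
  rw [← padicNorm_le_inv_iff_one_le_padicValRat h0]
  exact_mod_cast padicNorm_divDiff_neg_one_pow_le hninj hs

end TwoAdic

theorem neg_one_zpow_eq_of_emod_two_eq {K : Type*} [DivisionRing K] {a b : ℤ}
    (h : a % 2 = b % 2) : (-1 : K) ^ a = (-1) ^ b := by
  rw [← Int.cast_negOnePow, ← Int.cast_negOnePow,
    (Int.negOnePow_eq_iff a b).mpr (even_iff_two_dvd.mpr (Int.ModEq.dvd h.symm))]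

/-- **Lemma 4 (helper lemma).** Let `N > 3` and let `λ₀ < λ₁ < ⋯ < λ_{N-1}` be integers such
that the `i`-th value has the same parity as `i`.  Then the rational number
`S = Σᵢ (−1)^{λᵢ} / ∏_{j ≠ i} (λᵢ − λⱼ)` is nonzero and has 2-adic valuation at least `1`
(equivalently, `R = 1/S` has a denominator divisible by `2`). -/
theorem helper_lemma_two_adic (N : ℕ) (hN : 3 < N) (lam : Fin N → ℤ)
    (hmono : StrictMono lam)
    (hparity : ∀ i : Fin N, lam i % 2 = (i : ℤ) % 2)
    (S : ℚ)
    (hS : S = ∑ i : Fin N,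
      (-1 : ℚ) ^ (lam i) /
        ∏ j ∈ Finset.univ.erase i, ((lam i - lam j : ℤ) : ℚ)) :
    S ≠ 0 ∧ 1 ≤ padicValRat 2 S := by
  have : NeZero N := ⟨by omega⟩
  have hS' : S = divDiff univ (fun i => (lam i : ℚ)) fun i => (-1) ^ lam i := by
    rw [hS, divDiff_apply]
    push_cast
    rfl
  have hne : S ≠ 0 := by
    rw [hS']
    refine divDiff_ne_zero_of_alternating (fun i j h => mod_cast hmono h) fun i => ?_
    rw [neg_one_zpow_eq_of_emod_two_eq (hparity i), zpow_natCast, ← pow_add, ← two_mul,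
      pow_mul, neg_one_sq, one_pow]
    exact one_pos
  refine ⟨hne, ?_⟩
  rw [hS'] at hne ⊢
  exact one_le_padicValRat_divDiff_neg_one_zpow hmono.injective.injOn
    (by rw [Finset.card_univ, Fintype.card_fin]; omega) hne
end

section
/- Let G be a connected finite simple graph with adjacency matrix A and maximum vertex degree d, let a be a vertex of G with eccentricity ε_a, and let Δ ≥ 1 be an integer such that any two distinct elements of Φ_a differ in absolute value by at least √Δ. Then ε_a ≤ 2d/√Δ. In particular, if G has perfect state transfer from a to some vertex b, the distance from a to b is at most 2d/√Δ. -/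
open Matrix Finset

/-- The orthogonal projection onto the `μ`-eigenspace of a matrix `A`. -/
noncomputable def eigProj {n : Type*} [Fintype n] [DecidableEq n] (A : Matrix n n ℝ) (μ : ℝ)
    (x : EuclideanSpace ℝ n) : EuclideanSpace ℝ n :=
  (Submodule.orthogonalProjectionOnto (Module.End.eigenspace (Matrix.toEuclideanLin A) μ) x :
    EuclideanSpace ℝ n)

/-- `Φ_a`: the set of eigenvalues of `A` whose eigenprojection does not annihilate `δ_a`. -/
noncomputable def eigSupport {n : Type*} [Fintype n] [DecidableEq n] (A : Matrix n n ℝ)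
    (a : n) : Set ℝ :=
  {μ | eigProj A μ (EuclideanSpace.single a 1) ≠ 0}

/-!
The vectors `A ^ k δ_a` vanish outside the ball of radius `k` about `a` and are positive on its
boundary sphere, so no monic polynomial of degree at most `ε_a` in `A` annihilates `δ_a`. On the
other hand `δ_a` is a sum of eigenvectors with eigenvalues in `Φ_a`, so it is annihilated by
`∏_{μ ∈ Φ_a} (A - μ)`; hence `|Φ_a| ≥ ε_a + 1`. By Gershgorin every eigenvalue of `A` lies in
`[-d, d]`, and `|Φ_a|` points of that interval, pairwise `√Δ` apart, force `(|Φ_a| - 1) √Δ ≤ 2d`.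
-/

open Polynomial

theorem Finset.card_sub_one_mul_le_of_separated {α : Type*} [CommRing α] [LinearOrder α]
    [IsStrictOrderedRing α] {S : Finset α} (hne : S.Nonempty) {s x y : α}
    (hIcc : ∀ μ ∈ S, μ ∈ Set.Icc x y) (hsep : ∀ μ ∈ S, ∀ ν ∈ S, μ ≠ ν → s ≤ |μ - ν|) :
    (#S - 1 : α) * s ≤ y - x := by
  induction S using Finset.induction_on_max generalizing y with
  | empty => simp at hne
  | insert m T hlt ih =>
    rw [card_insert_of_notMem fun hm => (hlt m hm).false]
    obtain rfl | hT := T.eq_empty_or_nonempty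
    · simpa using (hIcc m (mem_insert_self m ∅)).1.trans (hIcc m (mem_insert_self m ∅)).2
    have hgap : ∀ μ ∈ T, μ ≤ m - s := fun μ hμ => by
      have := hsep m (mem_insert_self m T) μ (mem_insert_of_mem hμ) (hlt μ hμ).ne'
      rw [abs_of_pos (sub_pos.mpr (hlt μ hμ))] at this
      linarith
    have := ih hT (fun μ hμ => ⟨(hIcc μ (mem_insert_of_mem hμ)).1, hgap μ hμ⟩)
      (fun μ hμ ν hν => hsep μ (mem_insert_of_mem hμ) ν (mem_insert_of_mem hν))
    have := (hIcc m (mem_insert_self m T)).2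
    push_cast
    linarith

open Module End in
theorem LinearMap.IsSymmetric.exists_finset_aeval_prod_apply_eq_zero {E : Type*}
    [NormedAddCommGroup E] [InnerProductSpace ℝ E] [FiniteDimensional ℝ E] {T : E →ₗ[ℝ] E}
    (hT : T.IsSymmetric) (x : E) :
    ∃ S : Finset ℝ, (∀ μ ∈ S, (eigenspace T μ).starProjection x ≠ 0) ∧
      aeval T (∏ μ ∈ S, (X - C μ)) x = 0 := by
  set b := hT.eigenvectorBasis rfl
  set lam := hT.eigenvalues rfl
  have hb : ∀ i, HasEigenvector T (lam i) (b i) := hT.hasEigenvector_eigenvectorBasis rfl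
  refine ⟨(univ.filter fun i => inner ℝ (b i) x ≠ 0).image lam, ?_, ?_⟩
  · simp only [mem_image, mem_filter, mem_univ, true_and]
    rintro _ ⟨i, hi, rfl⟩ hP
    apply hi
    rw [← (eigenspace T (lam i)).starProjection_eq_self_iff.mpr (hb i).1,
      Submodule.inner_starProjection_left_eq_right, hP, inner_zero_right]
  · set p : ℝ[X] := ∏ μ ∈ _, (X - C μ)
    conv_lhs => rw [← b.sum_repr' x]
    refine (map_sum _ _ _).trans (sum_eq_zero fun i _ => ?_)
    rw [map_smul, aeval_apply_of_hasEigenvector (hb i)]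
    by_cases hi : inner ℝ (b i) x = 0
    · rw [hi, zero_smul]
    · rw [eval_prod, prod_eq_zero (mem_image_of_mem lam (by simpa using hi)) (by simp),
        zero_smul, smul_zero]

namespace Matrix

variable {n : Type*} [Fintype n] [DecidableEq n] {A : Matrix n n ℝ}

theorem aeval_toEuclideanLin_single_apply (p : ℝ[X]) (a v : n) :
    aeval (toEuclideanLin A) p (EuclideanSpace.single a 1) v = aeval A p v a := by
  rw [show toEuclideanLin A = toLpLinAlgEquiv 2 A from rfl, aeval_algEquiv]
  simp

theorem hasEigenvalue_toLin'_of_mem_eigSupport {a : n} {μ : ℝ} (hμ : μ ∈ eigSupport A a) :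
    Module.End.HasEigenvalue (toLin' A) μ := by
  rw [Module.End.hasEigenvalue_iff_mem_spectrum, spectrum_toLin', ← spectrum_toLpLin 2,
    ← Module.End.hasEigenvalue_iff_mem_spectrum, Module.End.hasEigenvalue_iff]
  intro h
  apply hμ
  simp [eigProj, h]

end Matrix

namespace SimpleGraph

variable {V : Type*} {G : SimpleGraph V}

theorem Reachable.exists_dist_eq_of_le {u v : V} (h : G.Reachable u v) {k : ℕ}
    (hk : k ≤ G.dist u v) : ∃ w, G.dist u w = k := by
  obtain ⟨p, hp⟩ := h.exists_walk_length_eq_dist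
  refine ⟨p.getVert k, ?_⟩
  rw [← length_eq_dist_of_subwalk hp (p.isSubwalk_take k), Walk.take_length]
  omega

variable [Fintype V]

theorem Connected.exists_dist_eq_of_le_sup_dist (hconn : G.Connected) (a : V) {k : ℕ}
    (hk : k ≤ univ.sup (G.dist a)) : ∃ w, G.dist a w = k := by
  obtain ⟨v, -, hv⟩ := exists_mem_eq_sup univ ⟨a, mem_univ a⟩ (G.dist a)
  exact (hconn a v).exists_dist_eq_of_le (hv ▸ hk)

variable [DecidableRel G.Adj] [DecidableEq V] {R : Type*}

theorem adjMatrix_pow_apply_eq_zero_of_lt_dist [Semiring R] {u v : V} {n : ℕ}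
    (h : n < G.dist u v) : (G.adjMatrix R ^ n) u v = 0 := by
  rw [adjMatrix_pow_apply_eq_card_walk, Fintype.card_eq_zero_iff.mpr, Nat.cast_zero]
  exact ⟨fun ⟨p, hp⟩ => (G.dist_le p).not_gt (hp ▸ h)⟩

theorem Reachable.adjMatrix_pow_dist_apply_pos [Semiring R] [PartialOrder R]
    [IsStrictOrderedRing R] {u v : V} (h : G.Reachable u v) :
    0 < (G.adjMatrix R ^ G.dist u v) u v := by
  rw [adjMatrix_pow_apply_eq_card_walk, Nat.cast_pos, Fintype.card_pos_iff]
  obtain ⟨p, hp⟩ := h.exists_walk_length_eq_dist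
  exact ⟨⟨p, hp⟩⟩

/-- Only the leading term of `p` sees walks of length `dist u v`; the lower ones are too short. -/
theorem Reachable.aeval_adjMatrix_apply_pos [CommRing R] [PartialOrder R] [IsStrictOrderedRing R]
    {u v : V} (h : G.Reachable u v) {p : R[X]} (hp : p.Monic)
    (hdeg : p.natDegree = G.dist u v) : 0 < aeval (G.adjMatrix R) p u v := by
  rw [aeval_eq_sum_range, sum_range_succ, Matrix.add_apply, Matrix.sum_apply,
    sum_eq_zero fun j hj => ?_, zero_add, Matrix.smul_apply, ← leadingCoeff, hp.leadingCoeff,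
    one_smul, hdeg]
  · exact h.adjMatrix_pow_dist_apply_pos
  · rw [Matrix.smul_apply, adjMatrix_pow_apply_eq_zero_of_lt_dist (by simp_all), smul_zero]

theorem Connected.sup_dist_lt_natDegree [CommRing R] [PartialOrder R] [IsStrictOrderedRing R]
    (hconn : G.Connected) (a : V) {p : R[X]} (hp : p.Monic)
    (h : ∀ v, aeval (G.adjMatrix R) p v a = 0) : univ.sup (G.dist a) < p.natDegree := by
  by_contra! hle
  obtain ⟨v, hv⟩ := hconn.exists_dist_eq_of_le_sup_dist a hle
  exact (hconn v a).aeval_adjMatrix_apply_pos hp (by rw [dist_comm, hv]) |>.ne' (h v)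

theorem abs_le_of_hasEigenvalue {d : ℕ} (hd : ∀ v, G.degree v ≤ d) {μ : ℝ}
    (hμ : Module.End.HasEigenvalue (toLin' (G.adjMatrix ℝ)) μ) : |μ| ≤ d := by
  obtain ⟨k, hk⟩ := eigenvalue_mem_ball hμ
  have hrow : ∑ j ∈ univ.erase k, ‖G.adjMatrix ℝ k j‖ = G.degree k := by
    rw [sum_erase _ (by simp)]
    simp [adjMatrix_apply, apply_ite, ← card_neighborFinset_eq_degree, neighborFinset_eq_filter]
  rw [Metric.mem_closedBall, Real.dist_eq, adjMatrix_apply, if_neg G.irrefl, sub_zero, hrow] at hk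
  exact hk.trans (mod_cast hd k)

end SimpleGraph

/-- **The degree-distance bound.** Let `G` be a connected finite simple graph with maximum
degree `d`, let `a` be a vertex of eccentricity `ε_a`, and let `Δ ≥ 1` be an integer such
that distinct elements of `Φ_a` differ by at least `√Δ`.  Then `ε_a ≤ 2d/√Δ`; in
particular, if `G` has perfect state transfer from `a` to some vertex `b`, then the
distance from `a` to `b` is at most `2d/√Δ`. -/
theorem degree_distance_bound {V : Type*} [Fintype V] [DecidableEq V]
    (G : SimpleGraph V) [DecidableRel G.Adj] (hconn : G.Connected)
    (d : ℕ) (hd : d = Finset.univ.sup (fun v => G.degree v))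
    (a : V) (ε : ℕ) (hε : ε = Finset.univ.sup (G.dist a))
    (Δ : ℕ) (hΔ : 1 ≤ Δ)
    (hsep : ∀ μ ∈ eigSupport (G.adjMatrix ℝ) a, ∀ ν ∈ eigSupport (G.adjMatrix ℝ) a,
      μ ≠ ν → Real.sqrt Δ ≤ |μ - ν|) :
    (ε : ℝ) ≤ 2 * d / Real.sqrt Δ ∧
      ∀ b : V, (∃ t₀ : ℝ, 0 < t₀ ∧
          ‖NormedSpace.exp ((-Complex.I * t₀) • G.adjMatrix ℂ) b a‖ = 1) →
        (G.dist a b : ℝ) ≤ 2 * d / Real.sqrt Δ := by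
  obtain ⟨S, hSsupp, hSann⟩ := (isSymmetric_toEuclideanLin_iff.mpr (G.isHermitian_adjMatrix ℝ))
    |>.exists_finset_aeval_prod_apply_eq_zero (EuclideanSpace.single a 1)
  have hεS : ε < #S := by
    have := hconn.sup_dist_lt_natDegree a (p := ∏ μ ∈ S, (X - C μ)) (monic_prod_X_sub_C id S)
      fun v => by rw [← Matrix.aeval_toEuclideanLin_single_apply, hSann, PiLp.zero_apply]
    simpa [hε] using this
  have hdeg (v : V) : G.degree v ≤ d := hd ▸ le_sup (f := fun v => G.degree v) (mem_univ v)
  have hbound : ∀ μ ∈ S, μ ∈ Set.Icc (-d : ℝ) d := fun μ hμ =>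
    abs_le.mp <| G.abs_le_of_hasEigenvalue hdeg
      (Matrix.hasEigenvalue_toLin'_of_mem_eigSupport (hSsupp μ hμ))
  have hgap := card_sub_one_mul_le_of_separated (card_pos.mp (by omega)) hbound
    fun μ hμ ν hν => hsep μ (hSsupp μ hμ) ν (hSsupp ν hν)
  have hecc : (ε : ℝ) ≤ 2 * d / Real.sqrt Δ := by
    rw [le_div_iff₀ (Real.sqrt_pos.mpr (Nat.cast_pos.mpr hΔ))]
    calc (ε : ℝ) * √Δ ≤ (#S - 1 : ℝ) * √Δ := by
          gcongr
          exact le_sub_iff_add_le.mpr (mod_cast hεS)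
      _ ≤ 2 * d := by linarith
  exact ⟨hecc, fun b _ => le_trans (mod_cast hε ▸ le_sup (mem_univ b)) hecc⟩
end

section
/- Let A be a real symmetric N × N matrix and let a, b be indices with |(exp(−i t₀ A))_{b,a}| = 1 for some t₀ > 0. Then |(exp(−i 2t₀ A))_{a,a}| = 1 and |(exp(−i 2t₀ A))_{b,b}| = 1; that is, perfect state transfer at time t₀ implies perfect revival at both the input and output sites at time 2t₀. -/
/-!
`U = exp(-i t₀ A)` is unitary because `-i t₀ A` is skew-Hermitian, and symmetric because `A` is.
A unit-modulus entry `U b a` of a unitary matrix exhausts the unit norm of column `a`, so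
`(U * U) a a = U a b * U b a = (U b a)²`, and likewise at `b`; finally `exp(-2 i t₀ A) = U * U`.
-/

open Matrix

namespace Matrix

theorem IsHermitian.neg_I_mul_smul_mem_skewAdjoint {n : Type*} {H : Matrix n n ℂ}
    (hH : H.IsHermitian) (t : ℝ) : (-Complex.I * t) • H ∈ skewAdjoint _ :=
  hH.isSelfAdjoint.smul_mem_skewAdjoint (by simp [skewAdjoint.mem_iff])

variable {n 𝕜 : Type*} [Fintype n] [DecidableEq n] [RCLike 𝕜]

theorem exp_mem_unitaryGroup_of_mem_skewAdjoint {X : Matrix n n 𝕜} (hX : X ∈ skewAdjoint _) :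
    NormedSpace.exp X ∈ unitaryGroup n 𝕜 := by
  rw [mem_unitaryGroup_iff', star_eq_conjTranspose, ← exp_conjTranspose, ← star_eq_conjTranspose,
    skewAdjoint.mem_iff.mp hX, ← exp_add_of_commute _ _ (Commute.refl X).neg_left, neg_add_cancel,
    NormedSpace.exp_zero]

theorem sum_norm_sq_apply_eq_one_of_mem_unitaryGroup {U : Matrix n n 𝕜}
    (hU : U ∈ unitaryGroup n 𝕜) (j : n) : ∑ k, ‖U k j‖ ^ 2 = 1 := by
  have h : (Uᴴ * U) j j = ((∑ k, ‖U k j‖ ^ 2 : ℝ) : 𝕜) := by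
    simp only [mul_apply, conjTranspose_apply, ← starRingEnd_apply, RCLike.conj_mul]
    push_cast
    rfl
  rw [← star_eq_conjTranspose, Unitary.star_mul_self_of_mem hU, one_apply_eq] at h
  exact_mod_cast h.symm

theorem apply_eq_zero_of_norm_apply_eq_one {U : Matrix n n 𝕜} (hU : U ∈ unitaryGroup n 𝕜)
    {i j : n} (hij : ‖U i j‖ = 1) {k : n} (hk : k ≠ i) : U k j = 0 := by
  have hsum := sum_norm_sq_apply_eq_one_of_mem_unitaryGroup hU j
  rw [← Finset.add_sum_erase _ _ (Finset.mem_univ i), hij, one_pow, add_eq_left,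
    Finset.sum_eq_zero_iff_of_nonneg fun _ _ ↦ sq_nonneg _] at hsum
  simpa using hsum k (Finset.mem_erase.mpr ⟨hk, Finset.mem_univ k⟩)

theorem mul_self_apply_eq_of_norm_apply_eq_one {U : Matrix n n 𝕜} (hU : U ∈ unitaryGroup n 𝕜)
    {i j : n} (hij : ‖U i j‖ = 1) : (U * U) j j = U j i * U i j := by
  rw [mul_apply, Finset.sum_eq_single i (fun k _ hk ↦ by
    rw [apply_eq_zero_of_norm_apply_eq_one hU hij hk, mul_zero]) (by simp)]

theorem norm_mul_self_apply_eq_one {U : Matrix n n 𝕜} (hU : U ∈ unitaryGroup n 𝕜)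
    (hsymm : U.IsSymm) {i j : n} (hij : ‖U i j‖ = 1) :
    ‖(U * U) i i‖ = 1 ∧ ‖(U * U) j j‖ = 1 := by
  have hji : ‖U j i‖ = 1 := by rwa [hsymm.apply i j]
  exact ⟨by rw [mul_self_apply_eq_of_norm_apply_eq_one hU hji, norm_mul, hij, hji, one_mul],
    by rw [mul_self_apply_eq_of_norm_apply_eq_one hU hij, norm_mul, hij, hji, one_mul]⟩

end Matrix

theorem pst_implies_revival_general {N : Type*} [Fintype N] [DecidableEq N]
    (A : Matrix N N ℝ) (hA : A.IsSymm) (a b : N) (t₀ : ℝ)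
    (hPST : ‖
      (NormedSpace.exp ((-Complex.I * t₀) • A.map (Complex.ofReal ·)) b a)‖ = 1) :
    ‖
      (NormedSpace.exp ((-Complex.I * (2 * t₀)) • A.map (Complex.ofReal ·)) a a)‖ = 1 ∧
    ‖
      (NormedSpace.exp ((-Complex.I * (2 * t₀)) • A.map (Complex.ofReal ·)) b b)‖ = 1 := by
  set X : Matrix N N ℂ := (-Complex.I * t₀) • A.map (Complex.ofReal ·)
  have hsymm : X.IsSymm := (hA.map _).smul _
  have hskew : X ∈ skewAdjoint _ :=
    ((isHermitian_iff_isSymm.mpr hA).map _ fun _ ↦ by simp).neg_I_mul_smul_mem_skewAdjoint t₀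
  have hdouble : (-Complex.I * (2 * t₀)) • A.map (Complex.ofReal ·) = 2 • X := by
    rw [two_nsmul, ← add_smul]
    ring_nf
  rw [hdouble, exp_nsmul, sq]
  exact (norm_mul_self_apply_eq_one (exp_mem_unitaryGroup_of_mem_skewAdjoint hskew)
    hsymm.exp hPST).symm

/-- **Perfect state transfer implies perfect revival.** If a real symmetric matrix `A` has
perfect state transfer from `a` to `b` at time `t₀ > 0`, then there are perfect revivals at
both `a` and `b` at time `2t₀`. -/
theorem pst_implies_revival {N : Type*} [Fintype N] [DecidableEq N]
    (A : Matrix N N ℝ) (hA : A.IsSymm) (a b : N) (t₀ : ℝ) (ht₀ : 0 < t₀)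
    (hPST : ‖
      (NormedSpace.exp ((-Complex.I * t₀) • A.map (Complex.ofReal ·)) b a)‖ = 1) :
    ‖
      (NormedSpace.exp ((-Complex.I * (2 * t₀)) • A.map (Complex.ofReal ·)) a a)‖ = 1 ∧
    ‖
      (NormedSpace.exp ((-Complex.I * (2 * t₀)) • A.map (Complex.ofReal ·)) b b)‖ = 1 :=
  pst_implies_revival_general A hA a b t₀ hPST
end

section
/- Let A be a real symmetric N × N matrix and let a, b be indices with |(exp(−i t₀ A))_{b,a}| = 1 for some t₀ > 0 (perfect state transfer). Then for every eigenvalue λ of A there exists a sign σ_λ ∈ {+1, −1} such that E_λ δ_b = σ_λ E_λ δ_a, where E_λ is the orthogonal projection onto the λ-eigenspace (strong cospectrality of a and b). In particular Φ_a = Φ_b. -/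
open Matrix

/-!
Write `U = exp (-i t₀ A)`. Since `A` is real symmetric, `U` is unitary and symmetric, and a
unitary matrix with `|U b a| = 1` has `U δ_a = U b a • δ_b`. For a real eigenvector `w` of `A`
with eigenvalue `μ` we have `U w = e^{-i t₀ μ} w`, and reading off the `a`-entry of `Uᵀ w = U w`
gives `U b a * w b = e^{-i t₀ μ} * w a`. So on the whole `μ`-eigenspace `w b = c * w a` for one
unimodular `c`, which must be `±1` because `w` is real; then `δ_b - σ δ_a` is orthogonal to the
eigenspace and the two projections agree up to the sign `σ`.
-/

namespace Matrix

open scoped Norms.Operator in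
theorem exp_mulVec_of_mulVec_eq_smul {n 𝕜 : Type*} [Fintype n] [DecidableEq n] [RCLike 𝕜]
    {B : Matrix n n 𝕜} {v : n → 𝕜} {c : 𝕜} (h : B *ᵥ v = c • v) :
    NormedSpace.exp B *ᵥ v = NormedSpace.exp c • v := by
  have hpow (k : ℕ) : B ^ k *ᵥ v = c ^ k • v := by
    induction k with
    | zero => simp
    | succ k ih => rw [pow_succ, ← mulVec_mulVec, h, mulVec_smul, ih, smul_smul, pow_succ']
  have hB := (NormedSpace.exp_series_hasSum_exp' (𝕂 := 𝕜) B).map (mulVec.addMonoidHomLeft v)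
    (continuous_id.matrix_mulVec continuous_const)
  have hc := (NormedSpace.exp_series_hasSum_exp' (𝕂 := 𝕜) c).smul_const v
  refine hB.unique (hc.congr_fun fun k => ?_)
  simp [mulVec.addMonoidHomLeft, smul_mulVec, hpow, smul_smul]

theorem exp_mem_unitaryGroup_of_conjTranspose_eq_neg {n 𝕜 : Type*} [Fintype n] [DecidableEq n]
    [RCLike 𝕜] {M : Matrix n n 𝕜} (h : Mᴴ = -M) : NormedSpace.exp M ∈ unitaryGroup n 𝕜 := by
  rw [mem_unitaryGroup_iff', star_eq_conjTranspose, ← exp_conjTranspose, h, exp_neg]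
  exact nonsing_inv_mul _ ((isUnit_exp M).map detMonoidHom)

theorem apply_eq_zero_of_norm_apply_eq_one_s6 {n 𝕜 : Type*} [Fintype n] [DecidableEq n] [RCLike 𝕜]
    {U : Matrix n n 𝕜} (hU : U ∈ unitaryGroup n 𝕜) {a b : n} (h : ‖U b a‖ = 1) {x : n}
    (hx : x ≠ b) : U x a = 0 := by
  have hcol : ∑ y, ‖U y a‖ ^ 2 = 1 := by
    have := congr_fun₂ (mem_unitaryGroup_iff'.mp hU) a a
    simp only [mul_apply, star_apply, one_apply_eq, RCLike.star_def, RCLike.conj_mul] at this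
    exact_mod_cast this
  rw [← Finset.add_sum_erase _ _ (Finset.mem_univ b), h, one_pow, add_eq_left,
    Finset.sum_eq_zero_iff_of_nonneg (fun _ _ => sq_nonneg _)] at hcol
  simpa using hcol x (Finset.mem_erase.mpr ⟨hx, Finset.mem_univ x⟩)

theorem apply_mul_eq_of_isSymm_of_mulVec_eq_smul {n R : Type*} [Fintype n] [CommSemiring R]
    {U : Matrix n n R} (hU : U.IsSymm) {v : n → R} {e : R} (hv : U *ᵥ v = e • v) {a b : n}
    (hcol : ∀ x ≠ b, U x a = 0) : U b a * v b = e * v a := by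
  have := congr_fun hv a
  rw [mulVec, dotProduct, Fintype.sum_eq_single b fun x hx => by rw [hU.apply x a, hcol x hx,
    zero_mul], hU.apply b a] at this
  simpa using this

theorem exp_smul_map_ofReal_mulVec_of_mem_eigenspace {n : Type*} [Fintype n] [DecidableEq n]
    (A : Matrix n n ℝ) (z : ℂ) {μ : ℝ} {w : EuclideanSpace ℝ n}
    (hw : w ∈ Module.End.eigenspace (toEuclideanLin A) μ) :
    NormedSpace.exp (z • A.map (Complex.ofReal ·)) *ᵥ (fun i => (w i : ℂ)) =
      NormedSpace.exp (z * μ) • fun i => (w i : ℂ) := by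
  apply exp_mulVec_of_mulVec_eq_smul
  have hw' : A *ᵥ w.ofLp = μ • w.ofLp :=
    congr_arg WithLp.ofLp (Module.End.mem_eigenspace_iff.mp hw)
  ext i
  rw [smul_mulVec, Pi.smul_apply]
  change z • (A.map Complex.ofRealHom *ᵥ (Complex.ofRealHom ∘ w.ofLp)) i = _
  rw [← RingHom.map_mulVec, hw']
  simp [mul_assoc]

end Matrix

theorem exists_sign_of_ofReal_eq_mul {ι : Type*} {c : ℂ} (hc : ‖c‖ = 1) {p q : ι → ℝ}
    (h : ∀ i, (p i : ℂ) = c * q i) : ∃ σ : ℝ, (σ = 1 ∨ σ = -1) ∧ ∀ i, p i = σ * q i := by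
  by_cases hq : ∃ i, q i ≠ 0
  · obtain ⟨i₀, hi₀⟩ := hq
    have hc_real : c = ((p i₀ / q i₀ : ℝ) : ℂ) := by
      rw [Complex.ofReal_div, h, mul_div_cancel_right₀ _ (by exact_mod_cast hi₀)]
    refine ⟨p i₀ / q i₀, ?_, fun i => by exact_mod_cast hc_real ▸ h i⟩
    rwa [hc_real, Complex.norm_real, Real.norm_eq_abs, abs_eq zero_le_one] at hc
  · push Not at hq
    refine ⟨1, Or.inl rfl, fun i => ?_⟩
    simpa [hq] using h i

theorem Submodule.orthogonalProjectionOnto_single_eq_smul {n : Type*} [Fintype n] [DecidableEq n]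
    (K : Submodule ℝ (EuclideanSpace ℝ n)) {a b : n} {σ : ℝ} (h : ∀ w ∈ K, w b = σ * w a) :
    (K.orthogonalProjectionOnto (EuclideanSpace.single b 1) : EuclideanSpace ℝ n) =
      σ • (K.orthogonalProjectionOnto (EuclideanSpace.single a 1) : EuclideanSpace ℝ n) := by
  have hperp : EuclideanSpace.single b 1 - σ • EuclideanSpace.single a 1 ∈ Kᗮ := by
    rw [Submodule.mem_orthogonal]
    intro w hw
    simp [inner_sub_right, inner_smul_right, EuclideanSpace.inner_single_right, h w hw]
  have := congr_arg Subtype.val (Submodule.orthogonalProjectionOnto_eq_zero_iff.mpr hperp)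
  simpa [sub_eq_zero] using this

def StronglyCospectral {n : Type*} [Fintype n] [DecidableEq n] (A : Matrix n n ℝ) (a b : n) :
    Prop :=
  ∀ μ : ℝ, ∃ σ : ℝ, (σ = 1 ∨ σ = -1) ∧
    eigProj A μ (EuclideanSpace.single b 1) = σ • eigProj A μ (EuclideanSpace.single a 1)

theorem StronglyCospectral.eigSupport_eq {n : Type*} [Fintype n] [DecidableEq n]
    {A : Matrix n n ℝ} {a b : n} (h : StronglyCospectral A a b) :
    eigSupport A a = eigSupport A b := by
  ext μ
  obtain ⟨σ, hσ, hproj⟩ := h μ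
  have hσ₀ : σ ≠ 0 := by rcases hσ with rfl | rfl <;> norm_num
  simp [eigSupport, hproj, hσ₀]

theorem stronglyCospectral_of_norm_exp_apply_eq_one {n : Type*} [Fintype n] [DecidableEq n]
    {A : Matrix n n ℝ} (hA : A.IsSymm) {a b : n} (t : ℝ)
    (hPST : ‖NormedSpace.exp ((-Complex.I * t) • A.map (Complex.ofReal ·)) b a‖ = 1) :
    StronglyCospectral A a b := by
  set U := NormedSpace.exp ((-Complex.I * t) • A.map (Complex.ofReal ·))
  have hU : U ∈ unitaryGroup n ℂ := by
    refine exp_mem_unitaryGroup_of_conjTranspose_eq_neg ?_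
    ext i j
    simp [hA.apply i j]
  have hUsymm : U.IsSymm := ((hA.map _).smul _).exp
  have hUba : U b a ≠ 0 := fun h0 => by simp [h0] at hPST
  have hcol : ∀ x ≠ b, U x a = 0 := fun x hx => apply_eq_zero_of_norm_apply_eq_one_s6 hU hPST hx
  intro μ
  have he : ‖NormedSpace.exp (-Complex.I * t * μ)‖ = 1 := by
    rw [← Complex.exp_eq_exp_ℂ, show -Complex.I * t * μ = ((-t * μ : ℝ) : ℂ) * Complex.I by
      push_cast; ring]
    exact Complex.norm_exp_ofReal_mul_I _
  set K := Module.End.eigenspace (toEuclideanLin A) μ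
  have hK (w : K) : ((w : EuclideanSpace ℝ n) b : ℂ) =
      NormedSpace.exp (-Complex.I * t * μ) / U b a * (w : EuclideanSpace ℝ n) a := by
    have := apply_mul_eq_of_isSymm_of_mulVec_eq_smul hUsymm
      (exp_smul_map_ofReal_mulVec_of_mem_eigenspace A _ w.2) hcol
    rw [div_mul_eq_mul_div, eq_div_iff hUba]
    linear_combination this
  obtain ⟨σ, hσ, hsign⟩ := exists_sign_of_ofReal_eq_mul (by rw [norm_div, he, hPST, div_one]) hK
  exact ⟨σ, hσ, Submodule.orthogonalProjectionOnto_single_eq_smul K fun w hw => hsign ⟨w, hw⟩⟩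

theorem pst_implies_strong_cospectrality_general {N : Type*} [Fintype N] [DecidableEq N]
    (A : Matrix N N ℝ) (hA : A.IsSymm) (a b : N) (t₀ : ℝ)
    (hPST : ‖
      (NormedSpace.exp ((-Complex.I * t₀) • A.map (Complex.ofReal ·)) b a)‖ = 1) :
    (∀ μ : ℝ, Module.End.HasEigenvalue (Matrix.toEuclideanLin A) μ →
      ∃ σ : ℝ, (σ = 1 ∨ σ = -1) ∧
        eigProj A μ (EuclideanSpace.single b 1) = σ • eigProj A μ (EuclideanSpace.single a 1)) ∧
    eigSupport A a = eigSupport A b := by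
  have h := stronglyCospectral_of_norm_exp_apply_eq_one hA t₀ hPST
  exact ⟨fun μ _ => h μ, h.eigSupport_eq⟩

/-- **Perfect state transfer implies strong cospectrality.** If a real symmetric matrix `A`
has perfect state transfer from `a` to `b` at time `t₀ > 0`, then for every eigenvalue `μ`
of `A` there is a sign `σ ∈ {+1, −1}` with `E_μ δ_b = σ • E_μ δ_a`; in particular
`Φ_a = Φ_b`. -/
theorem pst_implies_strong_cospectrality {N : Type*} [Fintype N] [DecidableEq N]
    (A : Matrix N N ℝ) (hA : A.IsSymm) (a b : N) (t₀ : ℝ) (ht₀ : 0 < t₀)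
    (hPST : ‖
      (NormedSpace.exp ((-Complex.I * t₀) • A.map (Complex.ofReal ·)) b a)‖ = 1) :
    (∀ μ : ℝ, Module.End.HasEigenvalue (Matrix.toEuclideanLin A) μ →
      ∃ σ : ℝ, (σ = 1 ∨ σ = -1) ∧
        eigProj A μ (EuclideanSpace.single b 1) = σ • eigProj A μ (EuclideanSpace.single a 1)) ∧
    eigSupport A a = eigSupport A b :=
  pst_implies_strong_cospectrality_general A hA a b t₀ hPST
end

section
/- Let A be a real symmetric N × N matrix and a an index. Suppose there exist integers α, Δ ≥ 1 and, for each λ ∈ Φ_a, an integer β_λ, all β_λ of the same parity, such that λ = (α + β_λ √Δ)/2 for every λ ∈ Φ_a. Then a has a perfect revival at time 2π/√Δ: |(exp(−i (2π/√Δ) A))_{a,a}| = 1. -/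
open Matrix

/-!
Expanding in an orthonormal eigenbasis `vᵢ` of `A` gives
`exp(-itA)_{aa} = ∑ᵢ e^{-itλᵢ} vᵢ(a)²`, where the weights `vᵢ(a)²` sum to `1` and vanish unless
`λᵢ ∈ Φ_a`. At `t = 2π/√Δ` an eigenvalue `λ = (α + β√Δ)/2` contributes the phase
`e^{-iπα/√Δ} (-1)^β`, which the parity condition makes the same for every `λ ∈ Φ_a`; the entry
is therefore this unit complex number.
-/

open Complex in
theorem cexp_neg_I_mul_half_eq_of_two_dvd_sub (α : ℝ) {r : ℝ} (hr : r ≠ 0) {m k : ℤ}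
    (h : 2 ∣ m - k) :
    exp (-I * (2 * Real.pi / r) * ((α + m * r) / 2 : ℝ)) =
      exp (-I * (2 * Real.pi / r) * ((α + k * r) / 2 : ℝ)) := by
  obtain ⟨j, hj⟩ := h
  rw [exp_eq_exp_iff_exists_int]
  have hr' : (r : ℂ) ≠ 0 := ofReal_ne_zero.mpr hr
  refine ⟨-j, ?_⟩
  rw [show (m : ℝ) = k + 2 * j by exact_mod_cast (by omega : m = k + 2 * j)]
  push_cast
  field_simp
  ring

theorem norm_sum_mul_ofReal_eq_one {ι : Type*} [Fintype ι] {f : ι → ℂ} {w : ι → ℝ} {c : ℂ}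
    (hw : ∑ i, w i = 1) (hc : ‖c‖ = 1) (hf : ∀ i, w i ≠ 0 → f i = c) :
    ‖∑ i, f i * w i‖ = 1 := by
  have hsum : ∑ i, f i * w i = ∑ i, c * w i := by
    refine Finset.sum_congr rfl fun i _ => ?_
    by_cases hi : w i = 0
    · simp [hi]
    · rw [hf i hi]
  rw [hsum, ← Finset.mul_sum, ← Complex.ofReal_sum, hw, Complex.ofReal_one, mul_one, hc]

theorem OrthonormalBasis.sum_apply_mul_self_eq_one {ι n : Type*} [Fintype ι] [Fintype n]
    [DecidableEq n] (b : OrthonormalBasis ι ℝ (EuclideanSpace ℝ n)) (a : n) :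
    ∑ i, b i a * b i a = 1 := by
  simpa [EuclideanSpace.inner_single_left, EuclideanSpace.inner_single_right] using
    b.sum_inner_mul_inner (EuclideanSpace.single a 1) (EuclideanSpace.single a 1)

theorem mem_eigSupport_of_mulVec_eq {n : Type*} [Fintype n] [DecidableEq n]
    {A : Matrix n n ℝ} {a : n} {μ : ℝ} {v : EuclideanSpace ℝ n} (hv : A *ᵥ v = μ • v)
    (ha : v a ≠ 0) : μ ∈ eigSupport A a := by
  intro h
  have hperp := Submodule.orthogonalProjectionOnto_eq_zero_iff.mp (Submodule.coe_eq_zero.mp h)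
  have hmem : v ∈ Module.End.eigenspace (Matrix.toEuclideanLin A) μ := by
    rw [Module.End.mem_eigenspace_iff]
    ext i
    simp [hv]
  apply ha
  simpa [EuclideanSpace.inner_single_right] using hperp v hmem

theorem Matrix.exp_units_conj_diagonal_apply {m 𝔸 : Type*} [Fintype m] [DecidableEq m]
    [NormedRing 𝔸] [NormedAlgebra ℚ 𝔸] [CompleteSpace 𝔸]
    (U : (Matrix m m 𝔸)ˣ) (d : m → 𝔸) (a b : m) :
    NormedSpace.exp ((U : Matrix m m 𝔸) * diagonal d * (↑U⁻¹ : Matrix m m 𝔸)) a b =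
      ∑ i, (U : Matrix m m 𝔸) a i * NormedSpace.exp (d i) * (↑U⁻¹ : Matrix m m 𝔸) i b := by
  rw [Matrix.exp_units_conj, exp_diagonal, mul_apply]
  simp only [mul_diagonal, Pi.coe_exp]

theorem Matrix.IsHermitian.exp_smul_map_ofReal_apply {n : Type*} [Fintype n] [DecidableEq n]
    {A : Matrix n n ℝ} (hA : A.IsHermitian) (s : ℂ) (a b : n) :
    NormedSpace.exp (s • A.map (Complex.ofReal ·)) a b =
      ∑ i, Complex.exp (s * hA.eigenvalues i) *
        (hA.eigenvectorBasis i a * hA.eigenvectorBasis i b : ℝ) := by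
  set u : (Matrix n n ℂ)ˣ :=
    Units.map (Complex.ofRealHom.mapMatrix : Matrix n n ℝ →+* Matrix n n ℂ)
      (Unitary.toUnits hA.eigenvectorUnitary)
  have hdiag : s • A.map (Complex.ofReal ·) =
      (u : Matrix n n ℂ) * diagonal (fun i => s * hA.eigenvalues i) * (↑u⁻¹ : Matrix n n ℂ) := by
    change s • Complex.ofRealHom.mapMatrix A = _
    conv_lhs => rw [hA.spectral_theorem, Unitary.conjStarAlgAut_apply]
    rw [map_mul, map_mul, RingHom.mapMatrix_apply (M := diagonal _), diagonal_map (map_zero _),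
      ← Matrix.smul_mul, ← Matrix.mul_smul, ← diagonal_smul]
    rfl
  rw [hdiag, exp_units_conj_diagonal_apply]
  refine Finset.sum_congr rfl fun i _ => ?_
  simp [u, ← Complex.exp_eq_exp_ℂ, star_apply]
  ring

/-- If the eigenvalues in `Φ_a` take the form `λ = (α + β_λ √Δ)/2` with `α, β_λ ∈ ℤ`,
`Δ ≥ 1` an integer, and all `β_λ` of the same parity, then `a` has a perfect revival at
time `2π/√Δ`. -/
theorem revival_of_eigenvalue_form {N : Type*} [Fintype N] [DecidableEq N]
    (A : Matrix N N ℝ) (hA : A.IsSymm) (a : N)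
    (α : ℤ) (Δ : ℕ) (hΔ : 1 ≤ Δ) (β : ℝ → ℤ)
    (hform : ∀ μ ∈ eigSupport A a, μ = ((α : ℝ) + (β μ : ℝ) * Real.sqrt Δ) / 2)
    (hpar : ∀ μ ∈ eigSupport A a, ∀ ν ∈ eigSupport A a, (2 : ℤ) ∣ β μ - β ν) :
    ‖
      (NormedSpace.exp
        ((-Complex.I * (2 * Real.pi / Real.sqrt Δ)) • A.map (Complex.ofReal ·)) a a)‖ = 1 := by
  have hA' : A.IsHermitian := isHermitian_iff_isSymm.mpr hA
  have hr : Real.sqrt Δ ≠ 0 := (Real.sqrt_pos.mpr (by exact_mod_cast hΔ)).ne'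
  rw [hA'.exp_smul_map_ofReal_apply]
  set v := hA'.eigenvectorBasis
  set μ := hA'.eigenvalues
  have hw := v.sum_apply_mul_self_eq_one a
  have hsupp : ∀ i, v i a * v i a ≠ 0 → μ i ∈ eigSupport A a := fun i hi =>
    mem_eigSupport_of_mulVec_eq (hA'.mulVec_eigenvectorBasis i) (left_ne_zero_of_mul hi)
  obtain ⟨i₀, -, hi₀⟩ := Finset.exists_ne_zero_of_sum_ne_zero (hw.trans_ne one_ne_zero)
  refine norm_sum_mul_ofReal_eq_one hw
    (c := Complex.exp (-Complex.I * (2 * Real.pi / Real.sqrt Δ) * μ i₀)) ?_ fun i hi => ?_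
  · simp [Complex.norm_exp]
  · rw [hform _ (hsupp i hi), hform _ (hsupp i₀ hi₀)]
    exact cexp_neg_I_mul_half_eq_of_two_dvd_sub α hr (hpar _ (hsupp i hi) _ (hsupp i₀ hi₀))
end

section
/- Let A be a real symmetric N × N matrix and a, b indices. Suppose there exist integers α, Δ ≥ 1 and, for each λ ∈ Φ_a, an integer β_λ such that λ = (α + β_λ √Δ)/2 and every (β_λ − β_μ)/2 is an integer. Suppose moreover that for each λ ∈ Φ_a there is σ_λ ∈ {+1, −1} with E_λ δ_b = σ_λ E_λ δ_a, that E_λ δ_b = 0 for every eigenvalue λ ∉ Φ_a, and that σ_λ σ_μ = (−1)^{(β_λ − β_μ)/2} for all λ, μ ∈ Φ_a. Then for every odd positive integer j, |(exp(−i (jπ/√Δ) A))_{b,a}| = 1 (perfect state transfer at all odd multiples of π/√Δ), and for every even positive integer j, |(exp(−i (jπ/√Δ) A))_{a,a}| = 1 (perfect revival at all even multiples). -/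
open Matrix

/-!
Expanding `δ_a` along the eigenspaces gives `exp(-itA)_{i,a} = ∑_λ e^{-itλ} (E_λ δ_a)_i`, and the
diagonal weights `(E_λ δ_a)_a` sum to `1`. At `t = jπ/√Δ` the phases of two eigenvalues of `Φ_a`
differ by `(-1)^{j(β_λ - β_μ)/2} = (σ_λ σ_μ)^j`, so `e^{-itλ} σ_λ^j` is one unimodular constant `γ`.
Since `E_λ` is self-adjoint, `(E_λ δ_a)_b = (E_λ δ_b)_a = σ_λ (E_λ δ_a)_a`; hence the `(b,a)` entry
(`j` odd) and the `(a,a)` entry (`j` even) both equal `γ ∑_λ (E_λ δ_a)_a = γ`.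
-/

open Module.End NormedSpace Complex

lemma Matrix.exp_mulVec_of_mulVec_eq_smul_s9 {N : Type*} [Fintype N] [DecidableEq N]
    {M : Matrix N N ℂ} {μ : ℂ} {w : N → ℂ} (hw : M *ᵥ w = μ • w) :
    exp M *ᵥ w = cexp μ • w := by
  let _ : NormedRing (Matrix N N ℂ) := Matrix.linftyOpNormedRing
  let _ : NormedAlgebra ℂ (Matrix N N ℂ) := Matrix.linftyOpNormedAlgebra
  have hpow (n : ℕ) : M ^ n *ᵥ w = μ ^ n • w := by
    induction n with
    | zero => simp
    | succ n ih => rw [pow_succ', ← mulVec_mulVec, ih, mulVec_smul, hw, smul_smul, pow_succ]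
  have hM := (exp_series_hasSum_exp' (𝕂 := ℂ) M).map (mulVec.addMonoidHomLeft w)
    (continuous_id.matrix_mulVec continuous_const)
  have hμ := (exp_series_hasSum_exp' (𝕂 := ℂ) μ).smul_const w
  have hterms : (mulVec.addMonoidHomLeft w ∘ fun n => (n.factorial : ℂ)⁻¹ • M ^ n) =
      fun n => ((n.factorial : ℂ)⁻¹ • μ ^ n) • w :=
    funext fun n => (smul_mulVec _ _ _).trans (by rw [hpow, smul_smul, smul_eq_mul])
  rw [hterms] at hM
  rw [exp_eq_exp_ℂ]
  exact hM.unique hμ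

lemma Matrix.map_ofReal_mulVec_eq_smul {N : Type*} [Fintype N] {M : Matrix N N ℝ} {μ : ℝ}
    {v : N → ℝ} (hv : M *ᵥ v = μ • v) :
    M.map ofReal *ᵥ (ofReal ∘ v) = (μ : ℂ) • (ofReal ∘ v) := by
  funext i
  simpa [Matrix.mulVec, dotProduct] using congrArg (fun u => (u i : ℂ)) hv

section

variable {N : Type*} [Fintype N] [DecidableEq N]

lemma sum_eigProj {A : Matrix N N ℝ} (hA : A.IsSymm) (x : EuclideanSpace ℝ N) :
    ∑ μ : Eigenvalues (toEuclideanLin A), eigProj A μ x = x := by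
  have hT : (toEuclideanLin A).IsSymmetric := isSymmetric_toEuclideanLin_iff.mpr hA
  exact hT.orthogonalFamily_eigenspaces'.sum_projection_of_mem_iSup x
    ((Submodule.orthogonal_eq_bot_iff.mp hT.orthogonalComplement_iSup_eigenspaces_eq_bot').ge
      Submodule.mem_top)

lemma mulVec_eigProj (A : Matrix N N ℝ) (μ : ℝ) (x : EuclideanSpace ℝ N) :
    A *ᵥ (eigProj A μ x).ofLp = μ • (eigProj A μ x).ofLp :=
  congrArg WithLp.ofLp (mem_eigenspace_iff.mp (Submodule.coe_mem
    (Submodule.orthogonalProjectionOnto (eigenspace (toEuclideanLin A) μ) x)))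

lemma eigProj_single_apply_comm (A : Matrix N N ℝ) (μ : ℝ) (a b : N) :
    eigProj A μ (EuclideanSpace.single a 1) b = eigProj A μ (EuclideanSpace.single b 1) a := by
  have h := Submodule.inner_starProjection_left_eq_right (eigenspace (toEuclideanLin A) μ)
    (EuclideanSpace.single b (1 : ℝ)) (EuclideanSpace.single a 1)
  rw [EuclideanSpace.inner_single_left, EuclideanSpace.inner_single_right] at h
  simp only [conj_trivial, one_mul] at h
  exact h.symm

lemma exp_smul_map_ofReal_apply {A : Matrix N N ℝ} (hA : A.IsSymm) (t : ℂ) (i a : N) :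
    exp (t • A.map ofReal) i a = ∑ μ : Eigenvalues (toEuclideanLin A),
      cexp (t * μ) * eigProj A μ (EuclideanSpace.single a 1) i := by
  set v : Eigenvalues (toEuclideanLin A) → N → ℂ :=
    fun μ => ofReal ∘ (eigProj A μ (EuclideanSpace.single a 1)).ofLp
  have hsingle : Pi.single a 1 = ∑ μ, v μ := by
    funext j
    have h := congrArg (· j) (sum_eigProj hA (EuclideanSpace.single a 1))
    simp only [WithLp.ofLp_sum, Finset.sum_apply, PiLp.ofLp_single] at h
    rw [Finset.sum_apply]
    simp only [v, Function.comp_apply]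
    rw [← ofReal_sum, h]
    rcases eq_or_ne j a with rfl | hja <;> simp [*]
  calc exp (t • A.map ofReal) i a = (exp (t • A.map ofReal) *ᵥ Pi.single a 1) i := by
        simp
    _ = ∑ μ, (exp (t • A.map ofReal) *ᵥ v μ) i := by
        rw [hsingle, mulVec_sum, Finset.sum_apply]
    _ = _ := by
        refine Finset.sum_congr rfl fun μ _ => ?_
        rw [exp_mulVec_of_mulVec_eq_smul_s9 (μ := t * μ)]
        · rfl
        · rw [smul_mulVec, map_ofReal_mulVec_eq_smul (mulVec_eigProj A μ _), smul_smul]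

lemma exp_smul_map_ofReal_apply_eq {A : Matrix N N ℝ} (hA : A.IsSymm) {t γ : ℂ} {i a : N}
    (h : ∀ μ ∈ eigSupport A a, cexp (t * μ) * eigProj A μ (EuclideanSpace.single a 1) i =
      γ * eigProj A μ (EuclideanSpace.single a 1) a) :
    exp (t • A.map ofReal) i a = γ := by
  have hdiag : ∑ μ : Eigenvalues (toEuclideanLin A),
      (eigProj A μ (EuclideanSpace.single a 1) a : ℂ) = 1 := by
    have h := congrArg (· a) (sum_eigProj hA (EuclideanSpace.single a 1))
    simp only [WithLp.ofLp_sum, Finset.sum_apply, PiLp.ofLp_single, Pi.single_eq_same] at h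
    exact_mod_cast h
  rw [exp_smul_map_ofReal_apply hA, ← mul_one γ, ← hdiag, Finset.mul_sum]
  refine Finset.sum_congr rfl fun μ _ => ?_
  by_cases hμ : (μ : ℝ) ∈ eigSupport A a
  · exact h μ hμ
  · rw [eigSupport, Set.mem_ofPred_eq, not_not] at hμ
    simp [hμ]

end

open scoped Real

lemma cexp_neg_I_mul_eq_mul_neg_one_zpow_pow {s μ ν : ℝ} (hs : s ≠ 0) {k : ℤ}
    (h : μ - ν = k * s) (j : ℕ) :
    cexp (-I * (j * π / s) * μ) = cexp (-I * (j * π / s) * ν) * ((-1) ^ k) ^ j := by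
  have hμ : (μ : ℂ) = ν + k * s := by exact_mod_cast (sub_eq_iff_eq_add'.mp h)
  have hs' : (s : ℂ) ≠ 0 := ofReal_ne_zero.mpr hs
  have hexp : -I * (j * π / s) * μ = -I * (j * π / s) * ν + (-(k * j) : ℤ) * (π * I) := by
    rw [hμ]; push_cast; field_simp; ring
  rw [hexp, exp_add, exp_int_mul, exp_pi_mul_I, _root_.zpow_neg, ← _root_.inv_zpow, inv_neg,
    inv_one, _root_.zpow_mul, zpow_natCast]

lemma exists_forall_cexp_mul_mul_pow_eq {S : Set ℝ} {s c : ℝ} (hs : s ≠ 0) {β : ℝ → ℤ}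
    {σ : ℝ → ℝ} (hform : ∀ μ ∈ S, μ = (c + β μ * s) / 2)
    (hpar : ∀ μ ∈ S, ∀ ν ∈ S, (2 : ℤ) ∣ β μ - β ν)
    (hsign : ∀ μ ∈ S, ∀ ν ∈ S, σ μ * σ ν = (-1 : ℝ) ^ ((β μ - β ν) / 2)) (j : ℕ) :
    ∃ γ : ℂ, ‖γ‖ = 1 ∧ ∀ μ ∈ S, cexp (-I * (j * π / s) * μ) * (σ μ : ℂ) ^ j = γ := by
  rcases S.eq_empty_or_nonempty with rfl | ⟨ν, hν⟩
  · exact ⟨1, norm_one, by simp⟩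
  have hsq : ∀ μ ∈ S, σ μ ^ 2 = 1 := fun μ hμ => by simpa [sq] using hsign μ hμ μ hμ
  refine ⟨cexp (-I * (j * π / s) * ν) * (σ ν : ℂ) ^ j, ?_, fun μ hμ => ?_⟩
  · have hphase : -I * (j * π / s) * ν = ((-(j * π / s * ν) : ℝ) : ℂ) * I := by
      push_cast; ring
    have hσν : ‖σ ν‖ = 1 := (pow_eq_one_iff_of_nonneg (norm_nonneg _) two_ne_zero).mp
      (by rw [← norm_pow, hsq ν hν, norm_one])
    rw [norm_mul, norm_pow, norm_real, hσν, hphase, norm_exp_ofReal_mul_I, one_pow, one_mul]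
  obtain ⟨k, hk⟩ := hpar μ hμ ν hν
  have hdiff : μ - ν = k * s := by
    have hk' : (β μ : ℝ) - β ν = 2 * k := by exact_mod_cast hk
    rw [hform μ hμ, hform ν hν]
    linear_combination (s / 2) * hk'
  have hσμ : σ μ = (-1) ^ k * σ ν := by
    have h := hsign μ hμ ν hν
    rw [hk, Int.mul_ediv_cancel_left _ two_ne_zero] at h
    linear_combination σ ν * h - σ μ * hsq ν hν
  have hk2 : ((-1 : ℂ) ^ k) ^ j * ((-1 : ℂ) ^ k) ^ j = 1 := by
    rw [← mul_pow, ← mul_zpow, neg_one_mul, neg_neg, _root_.one_zpow, one_pow]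
  rw [cexp_neg_I_mul_eq_mul_neg_one_zpow_pow hs hdiff, hσμ]
  push_cast
  linear_combination (cexp (-I * (j * π / s) * ν) * (σ ν : ℂ) ^ j) * hk2

theorem pst_at_odd_multiples_general {N : Type*} [Fintype N] [DecidableEq N]
    (A : Matrix N N ℝ) (hA : A.IsSymm) (a b : N)
    (α : ℤ) (Δ : ℕ) (hΔ : 1 ≤ Δ) (β : ℝ → ℤ) (σ : ℝ → ℝ)
    (hform : ∀ μ ∈ eigSupport A a, μ = ((α : ℝ) + (β μ : ℝ) * Real.sqrt Δ) / 2)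
    (hpar : ∀ μ ∈ eigSupport A a, ∀ ν ∈ eigSupport A a, (2 : ℤ) ∣ β μ - β ν)
    (hσ : ∀ μ ∈ eigSupport A a, (σ μ = 1 ∨ σ μ = -1) ∧
      eigProj A μ (EuclideanSpace.single b 1) = σ μ • eigProj A μ (EuclideanSpace.single a 1))
    (hsign : ∀ μ ∈ eigSupport A a, ∀ ν ∈ eigSupport A a,
      σ μ * σ ν = (-1 : ℝ) ^ ((β μ - β ν) / 2)) :
    (∀ j : ℕ, Odd j →
      ‖(NormedSpace.exp
          ((-Complex.I * (j * Real.pi / Real.sqrt Δ)) • A.map (Complex.ofReal ·)) b a)‖ = 1) ∧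
    (∀ j : ℕ, 0 < j → Even j →
      ‖(NormedSpace.exp
          ((-Complex.I * (j * Real.pi / Real.sqrt Δ)) • A.map (Complex.ofReal ·)) a a)‖ = 1) := by
  have hs : Real.sqrt Δ ≠ 0 := Real.sqrt_ne_zero'.mpr (by exact_mod_cast hΔ)
  have hσsq : ∀ μ ∈ eigSupport A a, σ μ ^ 2 = 1 := fun μ hμ => by
    rcases (hσ μ hμ).1 with h | h <;> simp [h]
  refine ⟨fun j hj => ?_, fun j _ hj => ?_⟩ <;>
    obtain ⟨γ, hγ, hphase⟩ := exists_forall_cexp_mul_mul_pow_eq hs hform hpar hsign j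
  · rw [exp_smul_map_ofReal_apply_eq hA fun μ hμ => ?_, hγ]
    obtain ⟨m, rfl⟩ := hj
    rw [eigProj_single_apply_comm, (hσ μ hμ).2, ← hphase μ hμ, pow_succ, pow_mul, ← ofReal_pow,
      hσsq μ hμ]
    simp only [PiLp.smul_apply, smul_eq_mul, ofReal_mul, ofReal_one, one_pow]
    ring
  · rw [exp_smul_map_ofReal_apply_eq hA fun μ hμ => ?_, hγ]
    obtain ⟨m, rfl⟩ := hj
    rw [← hphase μ hμ, ← two_mul, pow_mul, ← ofReal_pow, hσsq μ hμ, ofReal_one, one_pow, mul_one]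

/-- **Lemma 2 (sufficient conditions for perfect state transfer).** Suppose the eigenvalues
in `Φ_a` take the form `λ = (α + β_λ √Δ)/2` with each `(β_λ − β_μ)/2` an integer, that `a`
and `b` are strongly cospectral with signs `σ_λ ∈ {±1}` satisfying
`σ_λ σ_μ = (−1)^{(β_λ − β_μ)/2}`, and that `E_λ δ_b = 0` for eigenvalues `λ ∉ Φ_a`.  Then
perfect state transfer from `a` to `b` occurs at all odd multiples of `π/√Δ`, with perfect
revivals at `a` at all even multiples. -/
theorem pst_at_odd_multiples {N : Type*} [Fintype N] [DecidableEq N]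
    (A : Matrix N N ℝ) (hA : A.IsSymm) (a b : N)
    (α : ℤ) (Δ : ℕ) (hΔ : 1 ≤ Δ) (β : ℝ → ℤ) (σ : ℝ → ℝ)
    (hform : ∀ μ ∈ eigSupport A a, μ = ((α : ℝ) + (β μ : ℝ) * Real.sqrt Δ) / 2)
    (hpar : ∀ μ ∈ eigSupport A a, ∀ ν ∈ eigSupport A a, (2 : ℤ) ∣ β μ - β ν)
    (hσ : ∀ μ ∈ eigSupport A a, (σ μ = 1 ∨ σ μ = -1) ∧
      eigProj A μ (EuclideanSpace.single b 1) = σ μ • eigProj A μ (EuclideanSpace.single a 1))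
    (hout : ∀ μ : ℝ, Module.End.HasEigenvalue (Matrix.toEuclideanLin A) μ →
      μ ∉ eigSupport A a → eigProj A μ (EuclideanSpace.single b 1) = 0)
    (hsign : ∀ μ ∈ eigSupport A a, ∀ ν ∈ eigSupport A a,
      σ μ * σ ν = (-1 : ℝ) ^ ((β μ - β ν) / 2)) :
    (∀ j : ℕ, Odd j →
      ‖(NormedSpace.exp
          ((-Complex.I * (j * Real.pi / Real.sqrt Δ)) • A.map (Complex.ofReal ·)) b a)‖ = 1) ∧
    (∀ j : ℕ, 0 < j → Even j →
      ‖(NormedSpace.exp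
          ((-Complex.I * (j * Real.pi / Real.sqrt Δ)) • A.map (Complex.ofReal ·)) a a)‖ = 1) :=
  pst_at_odd_multiples_general A hA a b α Δ hΔ β σ hform hpar hσ hsign
end

section
/- Let A be a real symmetric N × N matrix, B a real symmetric M × M matrix, and S a real N × M matrix with SᵀS = I_M and A S = S B. Suppose S e_p = δ_a and S e_q = δ_b for indices p, q of B and a, b of A (where e_p, e_q and δ_a, δ_b are standard basis vectors). If |(exp(−i t B))_{q,p}| = 1 for some t, then |(exp(−i t A))_{b,a}| = 1. (Perfect state transfer in a graph quotient lifts to perfect state transfer in the graph.) -/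
/-!
Since `A S = S B`, the intertwining passes to every power and hence to the exponential series:
`exp(-itA) S = S exp(-itB)`, and with `SᵀS = 1` this gives `Sᵀ exp(-itA) S = exp(-itB)`.
As `S` maps `e_p ↦ δ_a` and `e_q ↦ δ_b`, the `(q, p)` entry of the left side is the `(b, a)`
entry of `exp(-itA)`, so the two transition amplitudes are equal.
-/

open Matrix

namespace Matrix

variable {n m R : Type*}

theorem map_mulVec_single_one {R' : Type*} [Semiring R] [Semiring R'] [Fintype m]
    [DecidableEq m] [DecidableEq n] (f : R →+* R') {S : Matrix n m R} {p : m} {a : n}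
    (h : S *ᵥ Pi.single p 1 = Pi.single a 1) : S.map f *ᵥ Pi.single p 1 = Pi.single a 1 := by
  rw [mulVec_single_one] at h ⊢
  ext i
  have hi := congrFun h i
  simp only [col_apply, map_apply] at hi ⊢
  rw [hi, Pi.single_apply, Pi.single_apply]
  split_ifs <;> simp

theorem map_mul_eq_mul_map_of_mul_eq {R' : Type*} [Semiring R] [Semiring R'] [Fintype n]
    [Fintype m] (f : R →+* R') {A : Matrix n n R} {B : Matrix m m R} {S : Matrix n m R}
    (h : A * S = S * B) :
    A.map f * S.map f = S.map f * B.map f := by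
  rw [← Matrix.map_mul, h, Matrix.map_mul]

theorem transpose_map_mul_map_of_transpose_mul_eq_one {R' : Type*} [Semiring R] [Semiring R']
    [Fintype n] [DecidableEq m] (f : R →+* R') {S : Matrix n m R} (hS : Sᵀ * S = 1) :
    (S.map f)ᵀ * S.map f = 1 := by
  rw [← transpose_map, ← Matrix.map_mul, hS]
  simp

variable [Fintype n] [Fintype m] [DecidableEq n] [DecidableEq m]

theorem pow_mul_eq_mul_pow_of_mul_eq [Semiring R] {A : Matrix n n R} {B : Matrix m m R}
    {S : Matrix n m R} (h : A * S = S * B) : ∀ k : ℕ, A ^ k * S = S * B ^ k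
  | 0 => by simp
  | k + 1 => by
    rw [pow_succ, pow_succ, Matrix.mul_assoc, h, ← Matrix.mul_assoc,
      pow_mul_eq_mul_pow_of_mul_eq h k, Matrix.mul_assoc]

section

-- Any matrix norm will do: it only serves to make the exponential series summable.
attribute [local instance] Matrix.linftyOpNormedRing Matrix.linftyOpNormedAlgebra

theorem exp_mul_eq_mul_exp_of_mul_eq [RCLike R] {A : Matrix n n R} {B : Matrix m m R}
    {S : Matrix n m R} (h : A * S = S * B) :
    NormedSpace.exp A * S = S * NormedSpace.exp B := by
  have hA := (NormedSpace.exp_series_hasSum_exp' (𝕂 := R) A).mapL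
    (mulRightLinearMap n R S).toContinuousLinearMap
  have hB := (NormedSpace.exp_series_hasSum_exp' (𝕂 := R) B).mapL
    (mulLeftLinearMap m R S).toContinuousLinearMap
  refine hA.unique ?_
  convert hB using 1
  · funext k
    simp [pow_mul_eq_mul_pow_of_mul_eq h]
  · rfl

end

theorem apply_eq_of_mul_eq_of_mulVec_single [CommSemiring R] {X : Matrix n n R}
    {Y : Matrix m m R} {S : Matrix n m R} (hS : Sᵀ * S = 1) (h : X * S = S * Y)
    {p q : m} {a b : n} (hp : S *ᵥ Pi.single p 1 = Pi.single a 1)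
    (hq : S *ᵥ Pi.single q 1 = Pi.single b 1) : Y q p = X b a := by
  have hY : Sᵀ * X * S = Y := by
    rw [Matrix.mul_assoc, h, ← Matrix.mul_assoc, hS, Matrix.one_mul]
  calc Y q p = ((Sᵀ * X * S) *ᵥ Pi.single p 1) q := by rw [← hY, mulVec_single_one]; rfl
    _ = (Sᵀ *ᵥ (X *ᵥ Pi.single a 1)) q := by rw [← mulVec_mulVec, ← mulVec_mulVec, hp]
    _ = (S *ᵥ Pi.single q 1) ⬝ᵥ (X *ᵥ Pi.single a 1) := by
      rw [mulVec_transpose, dotProduct_comm, dotProduct_mulVec, dotProduct_single_one]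
    _ = X b a := by rw [hq, single_one_dotProduct, mulVec_single_one]; rfl

end Matrix

theorem quotient_pst_lifts_general {N M : Type*} [Fintype N] [DecidableEq N]
    [Fintype M] [DecidableEq M]
    (A : Matrix N N ℝ) (B : Matrix M M ℝ) (S : Matrix N M ℝ)
    (hS : Sᵀ * S = 1) (hint : A * S = S * B)
    (p q : M) (a b : N)
    (hp : S *ᵥ Pi.single p 1 = Pi.single a 1)
    (hq : S *ᵥ Pi.single q 1 = Pi.single b 1)
    (t : ℝ)
    (hPST : ‖
      (NormedSpace.exp ((-Complex.I * t) • B.map (Complex.ofReal ·)) q p)‖ = 1) :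
    ‖
      (NormedSpace.exp ((-Complex.I * t) • A.map (Complex.ofReal ·)) b a)‖ = 1 := by
  have hint' := map_mul_eq_mul_map_of_mul_eq Complex.ofRealHom hint
  have hexp := exp_mul_eq_mul_exp_of_mul_eq (A := (-Complex.I * t) • A.map Complex.ofRealHom)
    (B := (-Complex.I * t) • B.map Complex.ofRealHom)
    (by rw [Matrix.smul_mul, hint', Matrix.mul_smul])
  have hamp : NormedSpace.exp ((-Complex.I * t) • B.map (Complex.ofReal ·)) q p
      = NormedSpace.exp ((-Complex.I * t) • A.map (Complex.ofReal ·)) b a :=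
    apply_eq_of_mul_eq_of_mulVec_single
      (transpose_map_mul_map_of_transpose_mul_eq_one Complex.ofRealHom hS) hexp
      (map_mulVec_single_one Complex.ofRealHom hp) (map_mulVec_single_one Complex.ofRealHom hq)
  rwa [← hamp]

/-- **Perfect state transfer in a graph quotient lifts to the graph.** If `S` is an
isometric intertwiner (`Sᵀ S = 1`, `A S = S B`) mapping `e_p ↦ δ_a` and `e_q ↦ δ_b`, then
perfect state transfer from `p` to `q` under `B` implies perfect state transfer from `a`
to `b` under `A`. -/
theorem quotient_pst_lifts {N M : Type*} [Fintype N] [DecidableEq N]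
    [Fintype M] [DecidableEq M]
    (A : Matrix N N ℝ) (B : Matrix M M ℝ) (S : Matrix N M ℝ)
    (hA : A.IsSymm) (hB : B.IsSymm)
    (hS : Sᵀ * S = 1) (hint : A * S = S * B)
    (p q : M) (a b : N)
    (hp : S *ᵥ Pi.single p 1 = Pi.single a 1)
    (hq : S *ᵥ Pi.single q 1 = Pi.single b 1)
    (t : ℝ)
    (hPST : ‖
      (NormedSpace.exp ((-Complex.I * t) • B.map (Complex.ofReal ·)) q p)‖ = 1) :
    ‖
      (NormedSpace.exp ((-Complex.I * t) • A.map (Complex.ofReal ·)) b a)‖ = 1 :=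
  quotient_pst_lifts_general A B S hS hint p q a b hp hq t hPST
end

section
/- Fix D ≥ 1 and let A be the 2^D × 2^D matrix indexed by vectors x ∈ (ZMod 2)^D, with A_{x,y} = 1 if x and y differ in exactly one coordinate and A_{x,y} = 0 otherwise (the adjacency matrix of the D-dimensional hypercube graph). Then for every x, |(exp(−i (π/2) A))_{x + 𝟙, x}| = 1, where 𝟙 is the all-ones vector of (ZMod 2)^D; moreover, the graph distance between x and x + 𝟙 in the hypercube graph is D. Thus the hypercube achieves perfect state transfer over distance D at time π/2, using 2^D vertices. -/
/-! The adjacency matrix of the hypercube is `∑ᵢ Tᵢ`, where `Tᵢ` is the permutation matrix of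
translation by the `i`-th basis vector of `(ZMod 2)^D`. The `Tᵢ` commute and are involutions, and
for an involution `P` one has `exp (z • P) = cosh z • 1 + sinh z • P`, so at `z = -iπ/2` each
factor of `exp (-iπ/2 · A) = ∏ᵢ exp (-iπ/2 · Tᵢ)` is `-i Tᵢ`. Hence the evolution at time `π/2`
is `(-i)^D` times translation by `𝟙`, which moves every vertex to its antipode. The graph
distance on the hypercube is the Hamming distance, so that antipode lies at distance `D`. -/

open Matrix Finset

/-- The `D`-dimensional hypercube graph on vertex set `(ZMod 2)^D`: two vertices are
adjacent iff they differ in exactly one coordinate. -/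
def hypercube (D : ℕ) : SimpleGraph (Fin D → ZMod 2) where
  Adj x y := (Finset.univ.filter fun i => x i ≠ y i).card = 1
  symm := by
    constructor
    intro x y h
    simpa [ne_comm] using h
  loopless := by
    constructor
    intro x h
    simp at h

instance (D : ℕ) : DecidableRel (hypercube D).Adj :=
  fun x y => inferInstanceAs (Decidable ((Finset.univ.filter fun i => x i ≠ y i).card = 1))

section Involution

variable {𝔸 : Type*} [Ring 𝔸] [Algebra ℂ 𝔸] [TopologicalSpace 𝔸] [IsTopologicalRing 𝔸]
  [ContinuousSMul ℂ 𝔸] [T2Space 𝔸]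

theorem exp_smul_eq_cosh_add_sinh_of_mul_self_eq_one {P : 𝔸} (hP : P * P = 1) (z : ℂ) :
    NormedSpace.exp (z • P) = Complex.cosh z • (1 : 𝔸) + Complex.sinh z • P := by
  have hP_even (k : ℕ) : P ^ (2 * k) = 1 := by rw [pow_mul, sq, hP, one_pow]
  rw [NormedSpace.exp_eq_tsum ℂ]
  refine HasSum.tsum_eq (HasSum.even_add_odd ?_ ?_)
  · convert (Complex.hasSum_cosh z).smul_const (1 : 𝔸) using 2 with k
    rw [smul_pow, hP_even, smul_smul, div_eq_inv_mul]
  · convert (Complex.hasSum_sinh z).smul_const P using 2 with k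
    rw [smul_pow, pow_succ P, hP_even, one_mul, smul_smul, div_eq_inv_mul]

theorem exp_neg_I_pi_div_two_smul_of_mul_self_eq_one {P : 𝔸} (hP : P * P = 1) :
    NormedSpace.exp ((-Complex.I * (Real.pi / 2)) • P) = -Complex.I • P := by
  have hz : -Complex.I * (Real.pi / 2) = ((-(Real.pi / 2) : ℝ) : ℂ) * Complex.I := by
    push_cast; ring
  rw [exp_smul_eq_cosh_add_sinh_of_mul_self_eq_one hP, hz, Complex.cosh_mul_I,
    Complex.sinh_mul_I, ← Complex.ofReal_cos, ← Complex.ofReal_sin, Real.cos_neg,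
    Real.sin_neg, Real.cos_pi_div_two, Real.sin_pi_div_two]
  simp

end Involution

section Translation

variable {G : Type*} (R : Type*) [AddCommMonoid G] [DecidableEq G]

def translationMatrix [Zero R] [One R] (u : G) : Matrix G G R :=
  of fun a b => if a = b + u then 1 else 0

variable {R} [NonAssocSemiring R]

theorem translationMatrix_zero : translationMatrix R (0 : G) = 1 := by
  ext a b
  simp [translationMatrix, one_apply]

variable [Fintype G]

theorem translationMatrix_mul (u v : G) :
    translationMatrix R u * translationMatrix R v = translationMatrix R (u + v) := by
  ext a b
  rw [mul_apply, Finset.sum_eq_single (b + v)]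
  · simp [translationMatrix, add_assoc, add_comm v u]
  · intro c _ hc
    simp [translationMatrix, hc]
  · simp

theorem translationMatrix_mul_self {u : G} (hu : u + u = 0) :
    translationMatrix R u * translationMatrix R u = 1 := by
  rw [translationMatrix_mul, hu, translationMatrix_zero]

theorem commute_translationMatrix (u v : G) :
    Commute (translationMatrix R u) (translationMatrix R v) := by
  rw [Commute, SemiconjBy, translationMatrix_mul, translationMatrix_mul, add_comm]

theorem exp_neg_I_pi_div_two_smul_sum_translationMatrix {ι : Type*} (s : Finset ι)
    (u : ι → G) (hu : ∀ i ∈ s, u i + u i = 0) :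
    NormedSpace.exp ((-Complex.I * (Real.pi / 2)) • ∑ i ∈ s, translationMatrix ℂ (u i)) =
      (-Complex.I) ^ #s • translationMatrix ℂ (∑ i ∈ s, u i) := by
  classical
  induction s using Finset.induction with
  | empty => simp [translationMatrix_zero]
  | @insert a s ha ih =>
    have hcomm : Commute ((-Complex.I * (Real.pi / 2)) • translationMatrix ℂ (u a))
        ((-Complex.I * (Real.pi / 2)) • ∑ i ∈ s, translationMatrix ℂ (u i)) :=
      ((Commute.sum_right _ _ _ fun j _ => commute_translationMatrix (u a) (u j)).smul_right
        _).smul_left _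
    rw [Finset.sum_insert ha, smul_add, Matrix.exp_add_of_commute _ _ hcomm,
      exp_neg_I_pi_div_two_smul_of_mul_self_eq_one
        (translationMatrix_mul_self (hu a (mem_insert_self a s))),
      ih fun i hi => hu i (mem_insert_of_mem hi), smul_mul_smul_comm, translationMatrix_mul,
      card_insert_of_notMem ha, sum_insert ha, pow_succ']

end Translation

section BinaryVectors

variable {ι : Type*} [Fintype ι]

theorem hammingDist_add_one (x : ι → ZMod 2) :
    hammingDist x (x + 1) = Fintype.card ι := by
  have h_ne (p : ZMod 2) : p ≠ p + 1 := by decide +revert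
  rw [hammingDist, filter_true_of_mem fun i _ => ?_, card_univ]
  exact h_ne (x i)

variable [DecidableEq ι]

theorem eq_add_single_iff_filter_ne_eq_singleton (a b : ι → ZMod 2) (i : ι) :
    a = b + Pi.single i 1 ↔ ({j | a j ≠ b j} : Finset ι) = {i} := by
  rw [funext_iff, Finset.ext_iff]
  refine forall_congr' fun j => ?_
  simp only [Pi.add_apply, Pi.single_apply, mem_filter, mem_univ, true_and, mem_singleton]
  split_ifs with hj
  · simp only [hj, iff_true]
    generalize a i = p, b i = q
    decide +revert
  · simp [hj]

theorem eq_add_sum_single_filter_ne (u v : ι → ZMod 2) :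
    v = u + ∑ i ∈ {i | u i ≠ v i}, Pi.single i 1 := by
  ext j
  simp only [Pi.add_apply, Finset.sum_apply, Pi.single_apply, sum_ite_eq, mem_filter, mem_univ,
    true_and]
  generalize u j = p, v j = q
  decide +revert

end BinaryVectors

section Hypercube

variable {D : ℕ}

theorem hypercube_adj_iff {a b : Fin D → ZMod 2} :
    (hypercube D).Adj a b ↔ ∃ i, a = b + Pi.single i 1 := by
  simp only [eq_add_single_iff_filter_ne_eq_singleton]
  exact card_eq_one

theorem hypercube_adj_add_single (u : Fin D → ZMod 2) (i : Fin D) :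
    (hypercube D).Adj u (u + Pi.single i 1) :=
  (hypercube_adj_iff.mpr ⟨i, rfl⟩).symm

theorem hypercube_adjMatrix_eq_sum_translationMatrix (R : Type*) [NonAssocSemiring R] :
    (hypercube D).adjMatrix R = ∑ i, translationMatrix R (Pi.single i (1 : ZMod 2)) := by
  ext a b
  rw [Matrix.sum_apply, SimpleGraph.adjMatrix_apply]
  simp only [translationMatrix, of_apply]
  by_cases h : (hypercube D).Adj a b
  · obtain ⟨i, rfl⟩ := hypercube_adj_iff.mp h
    rw [if_pos h, Fintype.sum_eq_single i]
    · simp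
    · intro j hj
      rw [if_neg]
      intro hij
      have := congrFun (add_left_cancel hij) j
      simp [hj] at this
  · rw [if_neg h, eq_comm]
    exact sum_eq_zero fun i _ => if_neg fun hi => h (hypercube_adj_iff.mpr ⟨i, hi⟩)

theorem hypercube_exp_neg_I_pi_div_two_smul_adjMatrix :
    NormedSpace.exp ((-Complex.I * (Real.pi / 2)) • (hypercube D).adjMatrix ℂ) =
      (-Complex.I) ^ D • translationMatrix ℂ (1 : Fin D → ZMod 2) := by
  rw [hypercube_adjMatrix_eq_sum_translationMatrix,
    exp_neg_I_pi_div_two_smul_sum_translationMatrix _ _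
      fun _ _ => funext fun _ => CharTwo.add_self_eq_zero _,
    card_univ, Fintype.card_fin, univ_sum_single]
  rfl

theorem hammingDist_le_length_of_hypercube_walk {u v : Fin D → ZMod 2}
    (p : (hypercube D).Walk u v) : hammingDist u v ≤ p.length := by
  induction p with
  | nil => simp
  | @cons u w v huw p ih =>
    calc hammingDist u v ≤ hammingDist u w + hammingDist w v := hammingDist_triangle u w v
      _ ≤ 1 + p.length := by rw [show hammingDist u w = 1 from huw]; omega
      _ = (p.cons huw).length := by rw [SimpleGraph.Walk.length_cons, add_comm]

theorem exists_hypercube_walk_add_sum_single (s : Finset (Fin D)) (u : Fin D → ZMod 2) :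
    ∃ p : (hypercube D).Walk u (u + ∑ i ∈ s, Pi.single i 1), p.length = #s := by
  induction s using Finset.induction generalizing u with
  | empty =>
    exact ⟨SimpleGraph.Walk.nil.copy rfl (by simp), by rw [SimpleGraph.Walk.length_copy]; rfl⟩
  | @insert a s ha ih =>
    obtain ⟨p, hp⟩ := ih (u + Pi.single a 1)
    refine ⟨(p.cons (hypercube_adj_add_single u a)).copy rfl (by rw [sum_insert ha, add_assoc]),
      ?_⟩
    rw [SimpleGraph.Walk.length_copy, SimpleGraph.Walk.length_cons, hp, card_insert_of_notMem ha]

theorem hypercube_dist_eq_hammingDist (u v : Fin D → ZMod 2) :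
    (hypercube D).dist u v = hammingDist u v := by
  obtain ⟨p, hp⟩ := exists_hypercube_walk_add_sum_single {i | u i ≠ v i} u
  let q : (hypercube D).Walk u v := p.copy rfl (eq_add_sum_single_filter_ne u v).symm
  have hreach : (hypercube D).Reachable u v := ⟨q⟩
  obtain ⟨r, hr⟩ := hreach.exists_walk_length_eq_dist
  refine le_antisymm ?_ (hr ▸ hammingDist_le_length_of_hypercube_walk r)
  calc (hypercube D).dist u v ≤ q.length := SimpleGraph.dist_le q
    _ = hammingDist u v := by rw [SimpleGraph.Walk.length_copy, hp, hammingDist]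

end Hypercube

theorem hypercube_pst_general (D : ℕ) (x : Fin D → ZMod 2) :
    ‖(NormedSpace.exp
        ((-Complex.I * (Real.pi / 2)) • (hypercube D).adjMatrix ℂ) (x + 1) x)‖ = 1 ∧
    (hypercube D).dist x (x + 1) = D := by
  refine ⟨?_, by rw [hypercube_dist_eq_hammingDist, hammingDist_add_one, Fintype.card_fin]⟩
  rw [hypercube_exp_neg_I_pi_div_two_smul_adjMatrix, Matrix.smul_apply]
  simp [translationMatrix]

/-- **Hypercube perfect state transfer.** The `D`-dimensional hypercube achieves perfect
state transfer at time `π/2` from any vertex `x` to its antipode `x + 𝟙`, which lies at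
graph distance `D`; it uses `2^D` vertices. -/
theorem hypercube_pst (D : ℕ) (hD : 1 ≤ D) (x : Fin D → ZMod 2) :
    ‖(NormedSpace.exp
        ((-Complex.I * (Real.pi / 2)) • (hypercube D).adjMatrix ℂ) (x + 1) x)‖ = 1 ∧
    (hypercube D).dist x (x + 1) = D :=
  hypercube_pst_general D x
end

section
/- Fix N ≥ 2 and let J be the N × N real symmetric tridiagonal matrix with J_{n,n+1} = J_{n+1,n} = √(n(N − n)) for 1 ≤ n ≤ N − 1 and all other entries zero (the standard engineered perfect state transfer chain). Then |(exp(−i (π/2) J))_{N,1}| = 1; that is, the chain achieves perfect state transfer between its two end sites at time π/2. -/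
open Matrix

/-!
Index the sites by `0, …, n` with `n = N - 1`, so that `J_{m,m+1} = √((m+1)(n-m))`. The first
column of `exp (-i t J)` is the binomial state
`ψ_m(t) = √(n choose m) · cos^(n-m) t · (-i sin t)^m`: since `u = cos t` and `w = -i sin t`
satisfy `u' = -i w`, `w' = -i u`, the monomials `u^(n-m) w^m` solve `φ' = -i K φ` for the
tridiagonal `K` with `K_{m,m+1} = n - m`, `K_{m,m-1} = m`, and the binomial weights conjugate `K`
into `J`. Uniqueness for the linear ODE `ψ' = -i J ψ`, `ψ(0) = e_0`, identifies `ψ` with the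
column. At `t = π/2` every amplitude but `ψ_n = (-i)^n` vanishes.
-/

section

open NormedSpace

theorem eq_exp_smul_mul_of_hasDerivAt {𝔸 : Type*} [NormedRing 𝔸] [NormedAlgebra ℝ 𝔸]
    [CompleteSpace 𝔸] (a : 𝔸) {F : ℝ → 𝔸} (hF : ∀ s, HasDerivAt F (a * F s) s) (t : ℝ) :
    F t = exp (t • a) * F 0 := by
  have hconst : ∀ s, HasDerivAt (fun u : ℝ => exp (u • -a) * F u) 0 s := fun s => by
    have := (hasDerivAt_exp_smul_const (-a) s).mul (hF s)
    rwa [mul_assoc, neg_mul, mul_neg, neg_add_cancel] at this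
  have hW : exp (t • -a) * F t = F 0 := by
    simpa using is_const_of_deriv_eq_zero (fun u => (hconst u).differentiableAt)
      (fun u => (hconst u).deriv) t 0
  have hinv : exp (t • a) * exp (t • -a) = 1 := by
    let +nondep : NormedAlgebra ℚ 𝔸 := .restrictScalars ℚ ℝ 𝔸
    rw [smul_neg, ← NormedSpace.exp_add_of_commute (Commute.refl _).neg_right, add_neg_cancel,
      exp_zero]
  rw [← hW, ← mul_assoc, hinv, one_mul]

theorem Matrix.exp_smul_mulVec_eq_of_hasDerivAt {n 𝕜 : Type*} [Fintype n] [DecidableEq n]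
    [RCLike 𝕜] (A : Matrix n n 𝕜) {ψ : ℝ → n → 𝕜} (hψ : ∀ s, HasDerivAt ψ (A *ᵥ ψ s) s)
    (t : ℝ) : exp (t • A) *ᵥ ψ 0 = ψ t := by
  -- any Banach-algebra norm will do: `exp` only depends on the topology
  let _ := Matrix.linftyOpNormedRing (n := n) (α := 𝕜)
  let _ := Matrix.linftyOpNormedAlgebra (R := ℝ) (n := n) (α := 𝕜)
  let col : (n → 𝕜) →L[ℝ] Matrix n n 𝕜 := LinearMap.toContinuousLinearMap
    { toFun := replicateCol n, map_add' := replicateCol_add, map_smul' := replicateCol_smul }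
  have hF : ∀ s, HasDerivAt (col ∘ ψ) (A * col (ψ s)) s :=
    fun s => col.hasFDerivAt.comp_hasDerivAt s (hψ s)
  funext k
  exact (congrFun (congrFun (eq_exp_smul_mul_of_hasDerivAt A hF t) k) k).symm

end

theorem Matrix.mulVec_apply_of_tridiagonal {R : Type*} [NonUnitalNonAssocSemiring R] {N : ℕ}
    (c : ℕ → R) (A : Matrix (Fin N) (Fin N) R)
    (hA : ∀ i j : Fin N, A i j =
      if (i : ℕ) + 1 = j then c i else if (j : ℕ) + 1 = i then c j else 0)
    (hc : c (N - 1) = 0) (v : ℕ → R) (i : Fin N) :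
    (A *ᵥ fun j => v j) i =
      (if (i : ℕ) = 0 then 0 else c (i - 1) * v (i - 1)) + c i * v (i + 1) := by
  have hsplit : ∀ j : Fin N, A i j * v j =
      (if (i : ℕ) + 1 = j then c i * v j else 0) + (if (j : ℕ) + 1 = i then c j * v j else 0) := by
    intro j
    rw [hA]
    split_ifs <;> first | omega | simp
  simp only [mulVec, dotProduct, hsplit, Finset.sum_add_distrib]
  rw [Fin.sum_univ_eq_sum_range (fun j => if (i : ℕ) + 1 = j then c i * v j else 0),
    Fin.sum_univ_eq_sum_range (fun j => if j + 1 = (i : ℕ) then c j * v j else 0),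
    Finset.sum_ite_eq, add_comm]
  congr 1
  · obtain ⟨_ | k, hk⟩ := i
    · simp
    · simp [Finset.sum_ite_eq', show k < N by omega]
  · split_ifs with hi
    · rfl
    · rw [show (i : ℕ) = N - 1 by simp at hi; omega, hc, zero_mul]

namespace EngineeredChain

open Complex

noncomputable def coupling (n m : ℕ) : ℝ := √((m + 1) * (n - m))

noncomputable def amplitude (n m : ℕ) (t : ℝ) : ℂ :=
  √(n.choose m) * cos t ^ (n - m) * (-I * sin t) ^ m

lemma coupling_self (n : ℕ) : coupling n n = 0 := by simp [coupling]

lemma coupling_mul_sqrt_choose_succ {n m : ℕ} (hm : m ≤ n) :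
    coupling n m * √(n.choose (m + 1)) = (n - m) * √(n.choose m) := by
  have h := Nat.choose_succ_right_eq n m
  have hcast : ((m + 1) * (n - m) * n.choose (m + 1) : ℝ) = (n - m) ^ 2 * n.choose m := by
    have := congrArg (Nat.cast (R := ℝ)) h
    push_cast [Nat.cast_sub hm] at this
    linear_combination (n - m : ℝ) * this
  rw [coupling, ← Real.sqrt_mul' _ (Nat.cast_nonneg _), hcast,
    Real.sqrt_mul' _ (Nat.cast_nonneg _), Real.sqrt_sq (by simpa using hm)]

lemma coupling_mul_sqrt_choose {n m : ℕ} (hm : m < n) :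
    coupling n m * √(n.choose m) = (m + 1) * √(n.choose (m + 1)) := by
  have h := Nat.choose_succ_right_eq n m
  have hcast : ((m + 1) * (n - m) * n.choose m : ℝ) = (m + 1) ^ 2 * n.choose (m + 1) := by
    have := congrArg (Nat.cast (R := ℝ)) h
    push_cast [Nat.cast_sub hm.le] at this
    linear_combination -(m + 1 : ℝ) * this
  rw [coupling, ← Real.sqrt_mul' _ (Nat.cast_nonneg _), hcast,
    Real.sqrt_mul' _ (Nat.cast_nonneg _), Real.sqrt_sq (by positivity)]

lemma hasDerivAt_cos_pow_mul_sin_pow (a b : ℕ) (t : ℝ) :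
    HasDerivAt (fun s : ℝ => cos s ^ a * (-I * sin s) ^ b)
      (-I * (a * cos t ^ (a - 1) * (-I * sin t) ^ (b + 1)
        + b * cos t ^ (a + 1) * (-I * sin t) ^ (b - 1))) t := by
  have hu : HasDerivAt (fun s : ℝ => cos s) (-I * (-I * sin t)) t := by
    simpa [← mul_assoc] using (hasDerivAt_cos (t : ℂ)).comp_ofReal
  have hw : HasDerivAt (fun s : ℝ => -I * sin s) (-I * cos t) t :=
    ((hasDerivAt_sin (t : ℂ)).comp_ofReal).const_mul _
  refine ((hu.fun_pow a).fun_mul (hw.fun_pow b)).congr_deriv ?_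
  rcases a with _ | a <;> rcases b with _ | b <;>
    simp only [Nat.add_sub_cancel, Nat.cast_zero, Nat.cast_succ, zero_mul, zero_add, add_zero] <;>
    ring

lemma hasDerivAt_amplitude {n m : ℕ} (hm : m ≤ n) (t : ℝ) :
    HasDerivAt (amplitude n m)
      (-I * ((if m = 0 then 0 else coupling n (m - 1) * amplitude n (m - 1) t)
        + coupling n m * amplitude n (m + 1) t)) t := by
  refine ((hasDerivAt_cos_pow_mul_sin_pow (n - m) m t).const_mul (√(n.choose m) : ℂ)
    |>.congr_deriv ?_).congr_of_eventuallyEq (.of_forall fun s => by simp [amplitude, mul_assoc])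
  have hup := congrArg ofReal (coupling_mul_sqrt_choose_succ hm)
  obtain ⟨r, rfl⟩ := Nat.exists_eq_add_of_le hm
  push_cast at hup
  rcases m with _ | k
  · simp only [amplitude, Nat.sub_zero, Nat.zero_add, Nat.choose_zero_right, Nat.cast_one,
      Real.sqrt_one, ofReal_one, CharP.cast_eq_zero, zero_mul, add_zero, if_pos] at hup ⊢
    linear_combination (I * cos t ^ (r - 1) * (-I * sin t)) * hup
  · have hlow := congrArg ofReal (coupling_mul_sqrt_choose (n := k + 1 + r) (m := k) (by omega))
    push_cast at hlow
    simp only [amplitude, Nat.add_sub_cancel_left, show k + 1 + r - (k + 1 + 1) = r - 1 by omega,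
      show k + 1 + r - k = r + 1 by omega, Nat.add_sub_cancel, if_neg (Nat.succ_ne_zero k),
      Nat.cast_succ]
    linear_combination (I * cos t ^ (r + 1) * (-I * sin t) ^ k) * hlow
      + (I * cos t ^ (r - 1) * (-I * sin t) ^ (k + 2)) * hup

lemma amplitude_zero (n m : ℕ) : amplitude n m 0 = if m = 0 then 1 else 0 := by
  rcases m with _ | m <;> simp [amplitude]

lemma norm_amplitude_self_pi_div_two (n : ℕ) : ‖amplitude n n (Real.pi / 2)‖ = 1 := by
  simp [amplitude]

theorem exp_smul_apply_zero_eq_amplitude {n : ℕ} (J : Matrix (Fin (n + 1)) (Fin (n + 1)) ℝ)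
    (hJ : ∀ i j : Fin (n + 1), J i j =
      if (i : ℕ) + 1 = j then coupling n i else if (j : ℕ) + 1 = i then coupling n j else 0)
    (t : ℝ) (k : Fin (n + 1)) :
    NormedSpace.exp (t • ((-I) • J.map ofReal)) k 0 = amplitude n k t := by
  have hψ : ∀ s, HasDerivAt (fun s (m : Fin (n + 1)) => amplitude n m s)
      (((-I) • J.map ofReal) *ᵥ fun m => amplitude n m s) s := fun s => by
    refine hasDerivAt_pi.2 fun m => ?_
    rw [smul_mulVec, Pi.smul_apply, smul_eq_mul,
      mulVec_apply_of_tridiagonal (fun m => (coupling n m : ℂ)) _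
        (fun i j => by rw [map_apply, hJ]; split_ifs <;> rfl) (by simp [coupling_self])
        (fun m => amplitude n m s)]
    exact hasDerivAt_amplitude (Nat.lt_succ_iff.mp m.isLt) s
  have hinit : (fun m : Fin (n + 1) => amplitude n m 0) = Pi.single 0 1 := by
    funext m
    simp only [amplitude_zero, Pi.single_apply, Fin.ext_iff, Fin.val_zero]
  have := exp_smul_mulVec_eq_of_hasDerivAt _ hψ t
  rw [hinit, mulVec_single_one] at this
  exact congrFun this k

end EngineeredChain

/-- **The standard engineered perfect state transfer chain.** Let `J` be the `N × N`
tridiagonal matrix with couplings `J_{n,n+1} = √(n(N−n))` (sites numbered `1,…,N`, here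
indexed by `Fin N`).  Then the chain achieves perfect state transfer between its two end
sites at time `π/2`. -/
theorem engineered_chain_pst (N : ℕ) (hN : 2 ≤ N) (J : Matrix (Fin N) (Fin N) ℝ)
    (hJ : ∀ i j : Fin N, J i j =
      if (i : ℕ) + 1 = (j : ℕ) then Real.sqrt (((i : ℕ) + 1) * (N - 1 - (i : ℕ)))
      else if (j : ℕ) + 1 = (i : ℕ) then Real.sqrt (((j : ℕ) + 1) * (N - 1 - (j : ℕ)))
      else 0) :
    ‖(NormedSpace.exp ((-Complex.I * (Real.pi / 2)) • J.map (Complex.ofReal ·))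
        ⟨N - 1, by omega⟩ ⟨0, by omega⟩)‖ = 1 := by
  obtain ⟨n, rfl⟩ : ∃ n, N = n + 1 := ⟨N - 1, by omega⟩
  open EngineeredChain in
  have hJ' : ∀ i j : Fin (n + 1), J i j =
      if (i : ℕ) + 1 = j then coupling n i else if (j : ℕ) + 1 = i then coupling n j else 0 := by
    intro i j
    simp [hJ, coupling]
  open Complex in
  have hscalar : (-I * (Real.pi / 2)) • J.map ofReal = (Real.pi / 2) • ((-I) • J.map ofReal) := by
    rw [← smul_assoc, real_smul]
    push_cast
    ring_nf
  rw [hscalar, show (⟨n + 1 - 1, _⟩ : Fin (n + 1)) = ⟨n, n.lt_succ_self⟩ by simp]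
  open EngineeredChain in
  exact (congrArg norm (exp_smul_apply_zero_eq_amplitude J hJ' _ _)).trans
    (norm_amplitude_self_pi_div_two n)
end

section
/- For every k ∈ {1, 2} there is no k × 4 matrix M with entries in {0,1} such that Mᵀ M maps the all-ones vector of ℝ⁴ to 6 times itself; and there exists a 3 × 4 matrix M with entries in {0,1} such that Mᵀ M 𝟙₄ = 6 · 𝟙₄ (for example, the matrix with rows (1,1,1,1), (1,1,0,0), (0,0,1,1)). Consequently, in any graph with perfect state transfer over distance 4 whose distance partition has quotient equal to the standard engineered chain, the middle cell must contain at least 3 vertices, and 3 is achievable. -/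
open Matrix Finset

/-!
Pairing `Mᵀ M 𝟙 = 6 • 𝟙` with `𝟙` gives `‖M 𝟙‖² = 24`, i.e. the squares of the row sums
of `M` add up to `24`. For a `{0,1}` matrix the row sums are natural numbers, and `24` is
not a sum of at most two squares. With three rows `16 + 4 + 4 = 24` is realised by the rows
`(1,1,1,1)`, `(1,1,0,0)`, `(0,0,1,1)`, whose Gram matrix has constant row sums `6`.
-/

theorem sum_mulVec_transpose_mul_self_one {R m n : Type*} [CommSemiring R] [Fintype m]
    [Fintype n] (M : Matrix m n R) :
    ∑ j, ((Mᵀ * M) *ᵥ 1) j = ∑ i, (∑ j, M i j) ^ 2 := by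
  rw [← one_dotProduct, ← mulVec_mulVec, dotProduct_mulVec, vecMul_transpose]
  simp only [dotProduct, mulVec, Pi.one_apply, mul_one, sq]

theorem sum_sq_rowSum_eq_of_mulVec_one_eq_smul {R m n : Type*} [CommSemiring R] [Fintype m]
    [Fintype n] (M : Matrix m n R) (c : R) (h : (Mᵀ * M) *ᵥ 1 = c • 1) :
    ∑ i, (∑ j, M i j) ^ 2 = Fintype.card n * c := by
  rw [← sum_mulVec_transpose_mul_self_one, h]
  simp [nsmul_eq_mul]

theorem sum_eq_card_filter_of_zero_or_one {R ι : Type*} [AddCommMonoidWithOne R] [Fintype ι]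
    [DecidableEq R] (f : ι → R) (hf : ∀ j, f j = 0 ∨ f j = 1) :
    ∑ j, f j = #{j | f j = 1} := by
  rw [← sum_boole]
  refine sum_congr rfl fun j _ => ?_
  rcases hf j with h | h <;> simp [h]

theorem sum_sq_card_eq_of_zero_or_one_of_mulVec_one_eq_smul {R m n : Type*} [CommSemiring R]
    [CharZero R] [DecidableEq R] [Fintype m] [Fintype n] (M : Matrix m n R)
    (hM : ∀ i j, M i j = 0 ∨ M i j = 1) (c : ℕ) (h : (Mᵀ * M) *ᵥ 1 = (c : R) • 1) :
    ∑ i, #{j | M i j = 1} ^ 2 = Fintype.card n * c := by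
  have hsum := sum_sq_rowSum_eq_of_mulVec_one_eq_smul M c h
  simp only [fun i => sum_eq_card_filter_of_zero_or_one (M i) (hM i)] at hsum
  exact_mod_cast hsum

theorem sq_add_sq_ne_twentyFour (a b : ℕ) : a ^ 2 + b ^ 2 ≠ 24 := by
  intro h
  have ha : a ≤ 4 := by nlinarith
  have hb : b ≤ 4 := by nlinarith
  interval_cases a <;> interval_cases b <;> omega

/-- **Minimality of the middle cell for distance-4 transfer (Lemma 6, `D = 4` case).**
There is no `k × 4` matrix `M` with `{0,1}` entries, for `k ∈ {1, 2}`, such that `Mᵀ M`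
maps the all-ones vector of `ℝ⁴` to `6` times itself, but there is such a `3 × 4` matrix.
Hence, in any graph with perfect state transfer over distance `4` whose distance partition
has quotient equal to the standard engineered chain, the middle cell must contain at least
`3` vertices, and `3` is achievable. -/
theorem middle_cell_distance_four :
    (∀ k : ℕ, k = 1 ∨ k = 2 →
      ¬ ∃ M : Matrix (Fin k) (Fin 4) ℝ,
        (∀ i j, M i j = 0 ∨ M i j = 1) ∧
        (Mᵀ * M) *ᵥ (fun _ => (1 : ℝ)) = (6 : ℝ) • (fun _ => (1 : ℝ) : Fin 4 → ℝ)) ∧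
    (∃ M : Matrix (Fin 3) (Fin 4) ℝ,
      (∀ i j, M i j = 0 ∨ M i j = 1) ∧
      (Mᵀ * M) *ᵥ (fun _ => (1 : ℝ)) = (6 : ℝ) • (fun _ => (1 : ℝ) : Fin 4 → ℝ)) := by
  constructor
  · rintro k hk ⟨M, hM01, hM⟩
    have hsum := sum_sq_card_eq_of_zero_or_one_of_mulVec_one_eq_smul M hM01 6 (by exact_mod_cast hM)
    rcases hk with rfl | rfl
    · exact sq_add_sq_ne_twentyFour _ 0 (by simpa using hsum)
    · exact sq_add_sq_ne_twentyFour _ _ (by simpa [Fin.sum_univ_two] using hsum)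
  · refine ⟨!![1, 1, 1, 1; 1, 1, 0, 0; 0, 0, 1, 1], ?_, ?_⟩
    · intro i j
      fin_cases i <;> fin_cases j <;> simp
    · ext j
      fin_cases j <;> simp [mulVec, dotProduct, Fin.sum_univ_succ, mul_apply] <;> norm_num
end
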